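/- arXiv:2312.02101 — 6 statements merged into one kernel-verified Lean document; each statement's English description precedes it below -/
import Mathlib

section
/- Let δ ∈ (0,1) and let F : [0,∞) → ℝ be strictly concave, differentiable on (0,∞), with F(0) = 0 and F ≤ 0. Let F*(p) = inf_{y≥0}{yp − F(y)} be its concave conjugate and suppose ȳ > 0 satisfies F*(δ F′(ȳ)) − δ ȳ F′(ȳ) + F(ȳ) + m = 0 for some m > 0. Then F*(δF′(ȳ)) − δ ȳ F′(ȳ) > 0, and consequently F(ȳ) < −m. -/
open Set

set_option maxHeartbeats 1000000 in
/-- if δ < 1 and F*(δF′(ȳ)) − δȳF′(ȳ) + F(ȳ) + m = 0 for some ȳ > 0,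
then F*(δF′(ȳ)) − δȳF′(ȳ) > 0 and F(ȳ) < −m. -/
theorem stmt_5 (δ m : ℝ) (hδ : δ ∈ Ioo (0:ℝ) 1) (hm : 0 < m)
    (F F' : ℝ → ℝ)
    (hconc : StrictConcaveOn ℝ (Ici 0) F)
    (hF' : ∀ y > (0:ℝ), HasDerivWithinAt F (F' y) (Ici 0) y)
    (hF0 : F 0 = 0) (hFnp : ∀ y ≥ (0:ℝ), F y ≤ 0)
    (Fstar : ℝ → ℝ)
    (hFstar : ∀ p, Fstar p = sInf ((fun y => y * p - F y) '' Ici 0))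
    (ybar : ℝ) (hybar : 0 < ybar)
    (heq : Fstar (δ * F' ybar) - δ * ybar * F' ybar + F ybar + m = 0) :
    0 < Fstar (δ * F' ybar) - δ * ybar * F' ybar ∧ F ybar < -m := by
  obtain ⟨hδ0, hδ1⟩ := hδ
  obtain ⟨p, hp_def⟩ : ∃ p, F' ybar = p := ⟨_, rfl⟩
  rw [hp_def] at heq ⊢
  have h0mem : (0:ℝ) ∈ Ici (0:ℝ) := self_mem_Ici
  have hybarmem : ybar ∈ Ici (0:ℝ) := mem_Ici.2 hybar.le
  have hy2mem : ybar / 2 ∈ Ici (0:ℝ) := mem_Ici.2 (by positivity)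
  -- midpoint strict concavity facts
  have hmid : ∀ y : ℝ, 0 < y → F y / 2 < F (y / 2) := by
    intro y hy
    have h := hconc.2 h0mem (mem_Ici.2 hy.le) (ne_of_lt hy)
      one_half_pos one_half_pos (by norm_num)
    simp only [smul_eq_mul, hF0, mul_zero, zero_add] at h
    rw [show (1:ℝ)/2 * y = y/2 by ring] at h
    linarith
  have hFy2 : F (ybar / 2) < 0 := by
    have h1 := hmid (ybar / 2) (by positivity)
    have h2 := hFnp (ybar / 2 / 2) (by positivity)
    linarith
  have hFy : F ybar < 0 := by
    have h1 := hmid ybar hybar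
    have h2 := hFnp (ybar / 2) hy2mem
    linarith
  -- tangent line inequality at ybar
  have hder := hF' ybar hybar
  have htan : ∀ x ∈ Ici (0:ℝ), F x ≤ F ybar + p * (x - ybar) := by
    intro x hx
    rcases lt_trichotomy x ybar with h | h | h
    · have hs := hconc.concaveOn.le_slope_of_hasDerivWithinAt hx hybarmem h hder
      rw [slope_def_field] at hs
      have hd : 0 < ybar - x := by linarith
      rw [le_div_iff₀ hd] at hs
      nlinarith
    · simp [h]
    · have hs := hconc.concaveOn.slope_le_of_hasDerivWithinAt hybarmem hx h hder
      rw [slope_def_field] at hs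
      have hd : 0 < x - ybar := by linarith
      rw [div_le_iff₀ hd] at hs
      nlinarith
  -- derivative is negative
  have hp : p < 0 := by
    have h0 := htan 0 h0mem
    rw [hF0] at h0
    nlinarith
  have hδp : δ * p < 0 := mul_neg_of_pos_of_neg hδ0 hp
  -- chord bound: for y ≥ ybar/2, F y ≤ q * y with q = 2 F(ybar/2)/ybar
  obtain ⟨q, hq_def⟩ : ∃ q, q = 2 * F (ybar / 2) / ybar := ⟨_, rfl⟩
  have hq : q < 0 := by
    rw [hq_def]; exact div_neg_of_neg_of_pos (by linarith) hybar
  have hqy : q * ybar = 2 * F (ybar / 2) := by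
    rw [hq_def]; field_simp
  have hqy2 : q * (ybar / 2) = F (ybar / 2) := by
    rw [hq_def]; field_simp
  have hchord : ∀ y : ℝ, ybar / 2 ≤ y → F y ≤ q * y := by
    intro y hy
    rcases eq_or_lt_of_le hy with h | h
    · rw [← h]; linarith [hqy2]
    · have hy0 : 0 < y := lt_trans (by positivity) h
      have hb0 : (0:ℝ) ≤ ybar / (2 * y) := by positivity
      have ha0 : (0:ℝ) ≤ 1 - ybar / (2 * y) := by
        have : ybar / (2 * y) ≤ 1 := by
          rw [div_le_one (by positivity)]; linarith
        linarith
      have hcomb := hconc.concaveOn.2 h0mem (mem_Ici.2 hy0.le) ha0 hb0 (by ring)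
      have harg : (1 - ybar / (2 * y)) • (0:ℝ) + (ybar / (2 * y)) • y = ybar / 2 := by
        simp only [smul_eq_mul, mul_zero, zero_add]
        rw [div_mul_eq_mul_div, mul_div_mul_right _ _ hy0.ne']
      rw [harg] at hcomb
      simp only [smul_eq_mul, hF0, mul_zero, zero_add] at hcomb
      -- hcomb : (ybar/(2y)) * F y ≤ F (ybar/2)
      have h2y : (0:ℝ) < 2 * y := by positivity
      have hmul := mul_le_mul_of_nonneg_left hcomb h2y.le
      have hid : (2*y) * (ybar/(2*y) * F y) = ybar * F y := by
        field_simp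
      rw [hq_def, div_mul_eq_mul_div, le_div_iff₀ hybar]
      nlinarith [hmul, hid]
  -- uniform gap
  obtain ⟨c, hc, hc1, hc2, hc3, hc4⟩ :
      ∃ c : ℝ, 0 < c ∧ c ≤ -(δ * p) * ybar / 2 ∧ c ≤ -F ybar ∧
        c ≤ -2 * F (ybar / 2) ∧ c ≤ (-(δ * p) - q) * (ybar / 2) := by
    refine ⟨min (min (-(δ * p) * ybar / 2) (-F ybar))
      (min (-2 * F (ybar / 2)) ((-(δ * p) - q) * (ybar / 2))), ?_,
      le_trans (min_le_left _ _) (min_le_left _ _),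
      le_trans (min_le_left _ _) (min_le_right _ _),
      le_trans (min_le_right _ _) (min_le_left _ _),
      le_trans (min_le_right _ _) (min_le_right _ _)⟩
    apply lt_min
    · apply lt_min
      · nlinarith
      · linarith
    · apply lt_min
      · linarith
      · nlinarith
  -- pointwise lower bound
  have hkey : ∀ y : ℝ, 0 ≤ y → δ * ybar * p + c ≤ y * (δ * p) - F y := by
    intro y hy
    rcases le_or_gt y (ybar / 2) with h1 | h1
    · have hF := hFnp y hy
      have e := mul_le_mul_of_nonpos_left (show y - ybar ≤ -(ybar/2) by linarith) hδp.le
      linarith [e, hF, hc1]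
    · rcases le_or_gt y ybar with h2 | h2
      · have hF := hchord y h1.le
        rcases le_or_gt 0 (δ * p - q) with h3 | h3
        · have e := mul_le_mul_of_nonneg_left h1.le h3
          linarith [e, hF, hqy2, hc4]
        · have e := mul_le_mul_of_nonpos_left h2 h3.le
          linarith [e, hF, hqy, hc3]
      · have hF := htan y hy
        have e := mul_nonneg (mul_nonneg (show (0:ℝ) ≤ 1 - δ by linarith)
          (show (0:ℝ) ≤ -p by linarith)) (show (0:ℝ) ≤ y - ybar by linarith)
        linarith [e, hF, hc2]
  -- bound the infimum
  have hge : δ * ybar * p + c ≤ Fstar (δ * p) := by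
    rw [hFstar]
    apply le_csInf
    · exact Set.Nonempty.image _ ⟨0, h0mem⟩
    · rintro z ⟨y, hy, rfl⟩
      exact hkey y hy
  constructor
  · linarith
  · linarith
end

section
/- Let F : [0,∞) → ℝ be strictly concave and twice continuously differentiable with concave conjugate F*, let δ > 1 and m > 0, and suppose the map F_{δm}(y) := F*(δF′(y)) − δyF′(y) + F(y) + m is strictly decreasing with a unique zero ȳ > 0. Fix p_ȳ < F′(0) and let w*_ȳ solve −w*_ȳ(p) + (1−δ)p(w*_ȳ)′(p) + F*(δp) + m = 0 on (−∞, p_ȳ) with w*_ȳ(p_ȳ) = F*(p_ȳ). Then the glued function w*(p) := w*_ȳ(p) for p < p_ȳ and w*(p) := F*(p) for p ∈ [p_ȳ, F′(0)] is continuously differentiable on (−∞, F′(0)) if and only if p_ȳ = F′(ȳ). -/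
open Set

open Filter Topology

section
variable {F F' Fstar : ℝ → ℝ}

-- gradient inequality for concave functions
lemma aux_grad (hconc : ConcaveOn ℝ (Ici 0) F)
    (hF' : ∀ y ≥ (0:ℝ), HasDerivWithinAt F (F' y) (Ici 0) y) :
    ∀ y ≥ (0:ℝ), ∀ z ≥ (0:ℝ), F z ≤ F y + F' y * (z - y) := by
  intro y hy z hz
  rcases lt_trichotomy z y with h | h | h
  · have := hconc.le_slope_of_hasDerivWithinAt hz hy h (hF' y hy)
    rw [slope_def_field] at this
    have hyz : 0 < y - z := by linarith
    rw [le_div_iff₀ hyz] at this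
    nlinarith
  · subst h; simp
  · have := hconc.slope_le_of_hasDerivWithinAt hy hz h (hF' y hy)
    rw [slope_def_field, div_le_iff₀ (by linarith : (0:ℝ) < z - y)] at this
    nlinarith

lemma aux_strictAnti (hconc : StrictConcaveOn ℝ (Ici 0) F)
    (hF' : ∀ y ≥ (0:ℝ), HasDerivWithinAt F (F' y) (Ici 0) y) :
    StrictAntiOn F' (Ici 0) := by
  intro x hx y hy hxy
  calc F' y < slope F x y := hconc.lt_slope_of_hasDerivWithinAt hx hy hxy (hF' y hy)
    _ < F' x := hconc.slope_lt_of_hasDerivWithinAt hx hy hxy (hF' x hx)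

lemma aux_F'cont (hsmooth : ContDiffOn ℝ 2 F (Ici 0))
    (hF' : ∀ y ≥ (0:ℝ), HasDerivWithinAt F (F' y) (Ici 0) y) :
    ContinuousOn F' (Ici 0) := by
  have h := hsmooth.continuousOn_derivWithin (uniqueDiffOn_Ici 0) (by norm_num)
  apply h.congr
  intro y hy
  exact ((hF' y hy).derivWithin ((uniqueDiffOn_Ici 0) y hy)).symm

-- duality : Fstar (F' y) = y F' y - F y
lemma aux_dual (hconc : ConcaveOn ℝ (Ici 0) F)
    (hF' : ∀ y ≥ (0:ℝ), HasDerivWithinAt F (F' y) (Ici 0) y)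
    (hFstar : ∀ p, Fstar p = sInf ((fun y => y * p - F y) '' Ici 0)) :
    ∀ y ≥ (0:ℝ), Fstar (F' y) = y * F' y - F y := by
  intro y hy
  rw [hFstar]
  have hbdd : ∀ z ∈ Ici (0:ℝ), y * F' y - F y ≤ z * F' y - F z := by
    intro z hz
    have := aux_grad hconc hF' y hy z hz
    nlinarith
  apply le_antisymm
  · exact csInf_le ⟨y * F' y - F y, by rintro _ ⟨z, hz, rfl⟩; exact hbdd z hz⟩
      ⟨y, hy, rfl⟩
  · exact le_csInf ⟨y * F' y - F y, ⟨y, hy, rfl⟩⟩ (by rintro _ ⟨z, hz, rfl⟩; exact hbdd z hz)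

end

section
variable {F F' Fstar : ℝ → ℝ}

-- derivative of Fstar at F' y equals y (for y > 0)
lemma aux_derivFstar (hconc : StrictConcaveOn ℝ (Ici 0) F)
    (hsmooth : ContDiffOn ℝ 2 F (Ici 0))
    (hF' : ∀ y ≥ (0:ℝ), HasDerivWithinAt F (F' y) (Ici 0) y)
    (hFstar : ∀ p, Fstar p = sInf ((fun y => y * p - F y) '' Ici 0))
    (hFstarC1 : ContDiffOn ℝ 1 Fstar (Iio (F' 0)))
    {y : ℝ} (hy : 0 < y) : HasDerivAt Fstar y (F' y) := by
  have hanti := aux_strictAnti hconc hF'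
  have hdual := aux_dual hconc.concaveOn hF' hFstar
  have hgrad := aux_grad hconc.concaveOn hF' 
  have hyY : F' (y+1) < F' y := hanti (le_of_lt hy) (by linarith : (0:ℝ) ≤ y+1) (by linarith)
  have hy0 : F' y < F' 0 := hanti self_mem_Ici (le_of_lt hy) hy
  have hdiff : DifferentiableAt ℝ Fstar (F' y) :=
    (hFstarC1.differentiableOn one_ne_zero).differentiableAt (isOpen_Iio.mem_nhds hy0)
  -- Fstar p ≤ y p - F y on (F' (y+1), F' 0)
  have hkey : ∀ p ∈ Ioo (F' (y+1)) (F' 0), Fstar p ≤ y * p - F y := by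
    intro p hp
    have hiv : p ∈ F' '' Icc 0 (y+1) := by
      apply intermediate_value_Icc' (by linarith : (0:ℝ) ≤ y + 1)
        ((aux_F'cont hsmooth hF').mono (Icc_subset_Ici_self))
      exact ⟨le_of_lt hp.1, le_of_lt hp.2⟩
    obtain ⟨z, hz, hzp⟩ := hiv
    have hz0 : 0 ≤ z := hz.1
    rw [← hzp, hdual z hz0]
    have := hgrad z hz0 y (le_of_lt hy)
    nlinarith
  -- local minimum of g
  set g : ℝ → ℝ := fun p => y * p - F y - Fstar p with hg
  have hgmin : IsLocalMin g (F' y) := by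
    have hmem : Ioo (F' (y+1)) (F' 0) ∈ 𝓝 (F' y) := isOpen_Ioo.mem_nhds ⟨hyY, hy0⟩
    have hg0 : g (F' y) = 0 := by
      simp only [hg, hdual y (le_of_lt hy)]; ring
    filter_upwards [hmem] with p hp
    rw [hg0]
    have := hkey p hp
    simp only [hg]; linarith
  have hgder : HasDerivAt g (y - deriv Fstar (F' y)) (F' y) := by
    have h1 : HasDerivAt (fun p => y * p - F y) y (F' y) := by
      simpa using ((hasDerivAt_id (F' y)).const_mul y).sub_const (F y)
    exact h1.sub hdiff.hasDerivAt
  have := hgmin.deriv_eq_zero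
  rw [hgder.deriv] at this
  have hder : deriv Fstar (F' y) = y := by linarith
  have := hdiff.hasDerivAt
  rwa [hder] at this

-- F' is unbounded below
lemma aux_below (hconc : StrictConcaveOn ℝ (Ici 0) F)
    (hsmooth : ContDiffOn ℝ 2 F (Ici 0))
    (hF' : ∀ y ≥ (0:ℝ), HasDerivWithinAt F (F' y) (Ici 0) y)
    (hFstar : ∀ p, Fstar p = sInf ((fun y => y * p - F y) '' Ici 0))
    (hFstarC1 : ContDiffOn ℝ 1 Fstar (Iio (F' 0))) :
    ∀ p : ℝ, ∃ z ≥ (0:ℝ), F' z < p := by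
  have hanti := aux_strictAnti hconc hF'
  by_contra hcon
  push_neg at hcon
  obtain ⟨p, hp⟩ := hcon
  set E := F' '' Ici (0:ℝ) with hE
  have hbddE : BddBelow E := ⟨p, by rintro _ ⟨z, hz, rfl⟩; exact hp z hz⟩
  have hEne : E.Nonempty := ⟨F' 0, 0, self_mem_Ici, rfl⟩
  set ζ := sInf E with hζ
  have hζ1 : ζ ≤ F' 1 := csInf_le hbddE ⟨1, by norm_num, rfl⟩
  have hζ0 : ζ < F' 0 := lt_of_le_of_lt hζ1 (hanti (self_mem_Ici) (mem_Ici.2 zero_le_one) zero_lt_one)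
  have hcd : ContinuousOn (deriv Fstar) (Iio (F' 0)) :=
    hFstarC1.continuousOn_deriv_of_isOpen isOpen_Iio le_rfl
  have hca : ContinuousAt (deriv Fstar) ζ := hcd.continuousAt (isOpen_Iio.mem_nhds hζ0)
  obtain ⟨ε, hε, hεs⟩ := Metric.continuousAt_iff.1 hca 1 one_pos
  -- pick z1 with F' z1 < ζ + ε
  have hz1 : ∃ z1 ≥ (0:ℝ), F' z1 < ζ + ε := by
    by_contra hcc
    push_neg at hcc
    have : ζ + ε ≤ ζ := le_csInf hEne (by rintro _ ⟨z, hz, rfl⟩; exact hcc z hz)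
    linarith
  obtain ⟨z1, hz10, hz1lt⟩ := hz1
  set z := max z1 (max 1 (|deriv Fstar ζ| + 2)) with hzdef
  have hz0 : (0:ℝ) ≤ z := le_trans hz10 (le_max_left _ _)
  have hzz1 : F' z ≤ F' z1 := by
    rcases eq_or_lt_of_le (le_max_left z1 (max 1 (|deriv Fstar ζ| + 2))) with h | h
    · rw [hzdef, ← h]
    · exact le_of_lt (hanti hz10 hz0 h)
  have hzge : ζ ≤ F' z := csInf_le hbddE ⟨z, hz0, rfl⟩
  have hdist : dist (F' z) ζ < ε := by
    rw [Real.dist_eq, abs_of_nonneg (by linarith)]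
    linarith
  have := hεs hdist
  have hzpos : 0 < z := lt_of_lt_of_le one_pos (le_trans (le_max_left _ _) (le_max_right _ _))
  rw [(aux_derivFstar hconc hsmooth hF' hFstar hFstarC1 hzpos).deriv] at this
  rw [Real.dist_eq] at this
  have hzbig : |deriv Fstar ζ| + 2 ≤ z := le_trans (le_max_right _ _) (le_max_right _ _)
  have h1 : deriv Fstar ζ ≤ |deriv Fstar ζ| := le_abs_self _
  have h2 : z - deriv Fstar ζ ≥ 2 := by linarith
  rw [abs_of_nonneg (by linarith)] at this
  linarith

end

section
variable {F F' Fstar : ℝ → ℝ}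

lemma aux_bdd (hconc : StrictConcaveOn ℝ (Ici 0) F)
    (hsmooth : ContDiffOn ℝ 2 F (Ici 0))
    (hF' : ∀ y ≥ (0:ℝ), HasDerivWithinAt F (F' y) (Ici 0) y)
    (hFstar : ∀ p, Fstar p = sInf ((fun y => y * p - F y) '' Ici 0))
    (hFstarC1 : ContDiffOn ℝ 1 Fstar (Iio (F' 0))) (p : ℝ) :
    BddBelow ((fun y => y * p - F y) '' Ici 0) := by
  obtain ⟨z, hz0, hzp⟩ := aux_below hconc hsmooth hF' hFstar hFstarC1 p
  refine ⟨F' z * z - F z, ?_⟩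
  rintro _ ⟨y, hy, rfl⟩
  have := aux_grad hconc.concaveOn hF' z hz0 y hy
  simp only
  nlinarith [mul_nonneg (mem_Ici.1 hy) (le_of_lt (sub_pos.2 hzp))]

lemma aux_concave (hconc : StrictConcaveOn ℝ (Ici 0) F)
    (hsmooth : ContDiffOn ℝ 2 F (Ici 0))
    (hF' : ∀ y ≥ (0:ℝ), HasDerivWithinAt F (F' y) (Ici 0) y)
    (hFstar : ∀ p, Fstar p = sInf ((fun y => y * p - F y) '' Ici 0))
    (hFstarC1 : ContDiffOn ℝ 1 Fstar (Iio (F' 0))) :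
    ConcaveOn ℝ univ Fstar := by
  refine ⟨convex_univ, ?_⟩
  intro p _ q _ a b ha hb hab
  simp only [smul_eq_mul]
  rw [hFstar (a * p + b * q)]
  apply le_csInf ((nonempty_Ici (a := (0:ℝ))).image _)
  rintro _ ⟨y, hy, rfl⟩
  simp only
  have h1 : Fstar p ≤ y * p - F y := by
    rw [hFstar]; exact csInf_le (aux_bdd hconc hsmooth hF' hFstar hFstarC1 p) ⟨y, hy, rfl⟩
  have h2 : Fstar q ≤ y * q - F y := by
    rw [hFstar]; exact csInf_le (aux_bdd hconc hsmooth hF' hFstar hFstarC1 q) ⟨y, hy, rfl⟩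
  have e1 := mul_le_mul_of_nonneg_left h1 ha
  have e2 := mul_le_mul_of_nonneg_left h2 hb
  have key : a * (y*p - F y) + b * (y*q - F y) = y*(a*p+b*q) - F y := by
    linear_combination (-(F y)) * hab
  linarith

lemma aux_cont (hconc : StrictConcaveOn ℝ (Ici 0) F)
    (hsmooth : ContDiffOn ℝ 2 F (Ici 0))
    (hF' : ∀ y ≥ (0:ℝ), HasDerivWithinAt F (F' y) (Ici 0) y)
    (hFstar : ∀ p, Fstar p = sInf ((fun y => y * p - F y) '' Ici 0))
    (hFstarC1 : ContDiffOn ℝ 1 Fstar (Iio (F' 0))) :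
    Continuous Fstar := by
  rw [← continuousOn_univ]
  exact (aux_concave hconc hsmooth hF' hFstar hFstarC1).continuousOn isOpen_univ

lemma aux_range (hconc : StrictConcaveOn ℝ (Ici 0) F)
    (hsmooth : ContDiffOn ℝ 2 F (Ici 0))
    (hF' : ∀ y ≥ (0:ℝ), HasDerivWithinAt F (F' y) (Ici 0) y)
    (hFstar : ∀ p, Fstar p = sInf ((fun y => y * p - F y) '' Ici 0))
    (hFstarC1 : ContDiffOn ℝ 1 Fstar (Iio (F' 0)))
    {p : ℝ} (hp : p < F' 0) : ∃ y > (0:ℝ), F' y = p := by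
  obtain ⟨z, hz0, hzp⟩ := aux_below hconc hsmooth hF' hFstar hFstarC1 p
  have hiv : p ∈ F' '' Icc 0 z := by
    apply intermediate_value_Icc' hz0 ((aux_F'cont hsmooth hF').mono Icc_subset_Ici_self)
    exact ⟨le_of_lt hzp, le_of_lt hp⟩
  obtain ⟨y, hy, hyp⟩ := hiv
  refine ⟨y, ?_, hyp⟩
  rcases eq_or_lt_of_le hy.1 with h | h
  · exfalso; rw [← h] at hyp; rw [hyp] at hp; exact lt_irrefl _ hp
  · exact h

end

/-- If `f` has derivative `f'` on an open interval around `x` and `f'` tends to `L`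
at the punctured neighborhood of `x`, then `f' x = L`. -/
lemma aux_deriv_eq_of_tendsto {f f' : ℝ → ℝ} {a b x L : ℝ} (hax : a < x) (hxb : x < b)
    (hd : ∀ y ∈ Ioo a b, HasDerivAt f (f' y) y)
    (hL : Tendsto f' (𝓝[≠] x) (𝓝 L)) : f' x = L := by
  have hdx := hd x ⟨hax, hxb⟩
  have hderiv : ∀ y ∈ Ioo a b, deriv f y = f' y := fun y hy => (hd y hy).deriv
  have hcont : ContinuousWithinAt f (Ioo x b) x := hdx.continuousAt.continuousWithinAt
  have hmemR : Ioo x b ∈ 𝓝[>] x := Ioo_mem_nhdsGT_of_mem ⟨le_refl _, hxb⟩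
  have hR : HasDerivWithinAt f L (Ici x) x := by
    apply hasDerivWithinAt_Ici_of_tendsto_deriv
      (fun y hy => ((hd y ⟨hax.trans hy.1, hy.2⟩).differentiableAt.differentiableWithinAt)) hcont hmemR
    have h1 : Tendsto f' (𝓝[>] x) (𝓝 L) :=
      hL.mono_left (nhdsWithin_mono x fun y hy => ne_of_gt hy)
    apply h1.congr'
    filter_upwards [hmemR] with y hy using (hderiv y ⟨hax.trans hy.1, hy.2⟩).symm
  have hmemL : Ioo a x ∈ 𝓝[<] x := Ioo_mem_nhdsLT_of_mem ⟨hax, le_refl _⟩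
  have hLt : HasDerivWithinAt f L (Iic x) x := by
    apply hasDerivWithinAt_Iic_of_tendsto_deriv
      (fun y hy => ((hd y ⟨hy.1, hy.2.trans hxb⟩).differentiableAt.differentiableWithinAt))
      hdx.continuousAt.continuousWithinAt hmemL
    have h1 : Tendsto f' (𝓝[<] x) (𝓝 L) :=
      hL.mono_left (nhdsWithin_mono x fun y hy => ne_of_lt hy)
    apply h1.congr'
    filter_upwards [hmemL] with y hy using (hderiv y ⟨hy.1, hy.2.trans hxb⟩).symm
  have : HasDerivAt f L x := by
    have := hLt.union hR
    rw [Iic_union_Ici] at this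
    exact this.hasDerivAt (by simp)
  exact hdx.unique this

/-- the glued function w = w*_ȳ on (−∞, p_ȳ) and F* on [p_ȳ, F′(0)]
is continuously differentiable on (−∞, F′(0)) if and only if p_ȳ = F′(ȳ). -/
theorem stmt_8 (δ m pybar ybar : ℝ) (hδ : 1 < δ) (hm : 0 < m)
    (F F' : ℝ → ℝ)
    (hconc : StrictConcaveOn ℝ (Ici 0) F)
    (hsmooth : ContDiffOn ℝ 2 F (Ici 0))
    (hF' : ∀ y ≥ (0:ℝ), HasDerivWithinAt F (F' y) (Ici 0) y)
    (Fstar : ℝ → ℝ)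
    (hFstar : ∀ p, Fstar p = sInf ((fun y => y * p - F y) '' Ici 0))
    (hFstarC1 : ContDiffOn ℝ 1 Fstar (Iio (F' 0)))
    (Fδm : ℝ → ℝ)
    (hFδm : ∀ y, Fδm y = Fstar (δ * F' y) - δ * y * F' y + F y + m)
    (hanti : StrictAntiOn Fδm (Ici 0))
    (hybar : 0 < ybar) (hzero : Fδm ybar = 0)
    (huniq : ∀ y ≥ (0:ℝ), Fδm y = 0 → y = ybar)
    (hpybar : pybar < F' 0)
    (wybar dwybar : ℝ → ℝ)
    (hODE : ∀ p ∈ Iio pybar, HasDerivAt wybar (dwybar p) p ∧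
      -wybar p + (1 - δ) * p * dwybar p + Fstar (δ * p) + m = 0)
    (hterm : wybar pybar = Fstar pybar)
    (hwcont : ContinuousOn wybar (Iic pybar))
    (w : ℝ → ℝ)
    (hw : ∀ p, w p = if p < pybar then wybar p else Fstar p) :
    ContDiffOn ℝ 1 w (Iio (F' 0)) ↔ pybar = F' ybar := by
  have hdual := aux_dual hconc.concaveOn hF' hFstar
  have hFscont : Continuous Fstar := aux_cont hconc hsmooth hF' hFstar hFstarC1
  have hFsdiff : ∀ p ∈ Iio (F' 0), DifferentiableAt ℝ Fstar p := fun p hp =>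
    (hFstarC1.differentiableOn one_ne_zero).differentiableAt (isOpen_Iio.mem_nhds hp)
  have hcd : ContinuousOn (deriv Fstar) (Iio (F' 0)) :=
    hFstarC1.continuousOn_deriv_of_isOpen isOpen_Iio le_rfl
  have hδ0 : (1:ℝ) - δ ≠ 0 := by linarith
  have hgcont : Continuous (fun q => Fstar (δ * q)) :=
    hFscont.comp (continuous_const.mul continuous_id)
  have hwyb : ∀ q ∈ Iio pybar, w =ᶠ[𝓝 q] wybar := by
    intro q hq
    filter_upwards [isOpen_Iio.mem_nhds hq] with x hx
    rw [hw x, if_pos (mem_Iio.1 hx)]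
  have hwder : ∀ q ∈ Iio pybar, HasDerivAt w (dwybar q) q := fun q hq =>
    ((hODE q hq).1).congr_of_eventuallyEq (hwyb q hq)
  have hderiv_eq : ∀ q ∈ Iio pybar, deriv w q = dwybar q := fun q hq => (hwder q hq).deriv
  have hwpybar : w pybar = Fstar pybar := by rw [hw]; simp
  have hwF : EqOn w Fstar (Ici pybar) := by
    intro q hq; rw [hw, if_neg (not_lt.2 hq)]
  have hdw_eq : ∀ q ∈ Iio pybar, q ≠ 0 →
      dwybar q = (wybar q - Fstar (δ*q) - m)/((1-δ)*q) := by
    intro q hq hq0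
    have h2 := (hODE q hq).2
    rw [eq_div_iff (mul_ne_zero hδ0 hq0)]
    linarith
  have hwlim : Tendsto wybar (𝓝[<] pybar) (𝓝 (Fstar pybar)) := by
    have h1 := hwcont pybar self_mem_Iic
    rw [ContinuousWithinAt, hterm] at h1
    exact h1.mono_left (nhdsWithin_mono _ Iio_subset_Iic_self)
  constructor
  · -- C1 → pybar = F' ybar
    intro hC1
    have hdiffw : DifferentiableAt ℝ w pybar :=
      (hC1.differentiableOn one_ne_zero).differentiableAt (isOpen_Iio.mem_nhds hpybar)
    set d := deriv w pybar with hd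
    have hFd : deriv Fstar pybar = d := by
      have h1 : HasDerivWithinAt w (deriv Fstar pybar) (Ici pybar) pybar :=
        ((hFsdiff pybar hpybar).hasDerivAt.hasDerivWithinAt).congr
          (fun x hx => hwF hx) (hwF self_mem_Ici)
      have h2 : HasDerivWithinAt w d (Ici pybar) pybar := hdiffw.hasDerivAt.hasDerivWithinAt
      exact (uniqueDiffOn_Ici pybar pybar self_mem_Ici).eq_deriv _ h1 h2
    have hcw : ContinuousOn (deriv w) (Iio (F' 0)) :=
      hC1.continuousOn_deriv_of_isOpen isOpen_Iio le_rfl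
    have hlimd : Tendsto dwybar (𝓝[<] pybar) (𝓝 d) := by
      have h1 : Tendsto (deriv w) (𝓝 pybar) (𝓝 d) :=
        hcw.continuousAt (isOpen_Iio.mem_nhds hpybar)
      have h2 := h1.mono_left (nhdsWithin_le_nhds (s := Iio pybar))
      apply h2.congr'
      filter_upwards [self_mem_nhdsWithin] with q hq using (hderiv_eq q hq)
    have hlim1 : Tendsto (fun q => -wybar q + (1-δ)*q*dwybar q + Fstar (δ*q) + m) (𝓝[<] pybar)
        (𝓝 (-Fstar pybar + (1-δ)*pybar*d + Fstar (δ*pybar) + m)) := by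
      refine ((Tendsto.add (hwlim.neg) ?_).add ?_).add tendsto_const_nhds
      · exact (((continuous_const.mul continuous_id).tendsto pybar).mono_left
          nhdsWithin_le_nhds).mul hlimd
      · exact (hgcont.tendsto pybar).mono_left nhdsWithin_le_nhds
    have hzero' : -Fstar pybar + (1-δ)*pybar*d + Fstar (δ*pybar) + m = 0 := by
      refine tendsto_nhds_unique hlim1 ?_
      apply tendsto_const_nhds.congr'
      filter_upwards [self_mem_nhdsWithin] with q hq
      exact ((hODE q hq).2).symm
    obtain ⟨y0, hy0pos, hy0⟩ := aux_range hconc hsmooth hF' hFstar hFstarC1 hpybar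
    have hdy0 : d = y0 := by
      have h1 := (aux_derivFstar hconc hsmooth hF' hFstar hFstarC1 hy0pos).deriv
      rw [hy0] at h1
      rw [← hFd, h1]
    have hFsp : Fstar pybar = y0 * pybar - F y0 := by
      have := hdual y0 (le_of_lt hy0pos)
      rwa [hy0] at this
    have hFδm0 : Fδm y0 = 0 := by
      rw [hFδm, hy0]
      rw [hFsp, hdy0] at hzero'
      linarith
    have hy0b := huniq y0 (le_of_lt hy0pos) hFδm0
    rw [← hy0b]
    exact hy0.symm
  · -- pybar = F' ybar → C1
    intro hp
    have hpne : pybar ≠ 0 := by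
      intro h0
      have h1 : F' ybar = 0 := by rw [← hp, h0]
      have h2 := hdual ybar (le_of_lt hybar)
      rw [h1, mul_zero] at h2
      have h3 := hzero
      rw [hFδm, h1, mul_zero, mul_zero] at h3
      rw [h2] at h3
      linarith
    have hFder : HasDerivAt Fstar ybar pybar := by
      rw [hp]; exact aux_derivFstar hconc hsmooth hF' hFstar hFstarC1 hybar
    have hnum : Fstar (δ*pybar) - Fstar pybar + m = (δ-1) * ybar * pybar := by
      have h2 := hdual ybar (le_of_lt hybar)
      have h3 := hzero
      rw [hFδm] at h3
      rw [← hp] at h2 h3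
      linarith
    have hdwlim : Tendsto dwybar (𝓝[<] pybar) (𝓝 ybar) := by
      have hnum_t : Tendsto (fun q => wybar q - Fstar (δ*q) - m) (𝓝[<] pybar)
          (𝓝 (Fstar pybar - Fstar (δ*pybar) - m)) :=
        (hwlim.sub ((hgcont.tendsto pybar).mono_left nhdsWithin_le_nhds)).sub tendsto_const_nhds
      have hden_t : Tendsto (fun q => (1-δ)*q) (𝓝[<] pybar) (𝓝 ((1-δ)*pybar)) :=
        ((continuous_const.mul continuous_id).tendsto pybar).mono_left nhdsWithin_le_nhds
      have hden_ne : (1-δ)*pybar ≠ 0 := mul_ne_zero hδ0 hpne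
      have hdiv := hnum_t.div hden_t hden_ne
      have hval : (Fstar pybar - Fstar (δ*pybar) - m) / ((1-δ)*pybar) = ybar := by
        have hnn : Fstar pybar - Fstar (δ*pybar) - m = (1-δ)*pybar*ybar := by linarith
        rw [hnn]
        field_simp
      rw [hval] at hdiv
      apply hdiv.congr'
      have hne : ∀ᶠ q in 𝓝[<] pybar, q ≠ 0 :=
        eventually_nhdsWithin_of_eventually_nhds
          (eventually_ne_nhds hpne)
      filter_upwards [self_mem_nhdsWithin, hne] with q hq hq0
      exact (hdw_eq q hq hq0).symm
    have hwdiff_pybar : HasDerivAt w ybar pybar := by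
      have hL : HasDerivWithinAt w ybar (Iic pybar) pybar := by
        apply hasDerivWithinAt_Iic_of_tendsto_deriv (s := Iio pybar)
        · exact fun q hq => (hwder q hq).differentiableAt.differentiableWithinAt
        · have h1 : ContinuousWithinAt wybar (Iio pybar) pybar :=
            (hwcont pybar self_mem_Iic).mono Iio_subset_Iic_self
          exact h1.congr (fun q hq => by rw [hw, if_pos (mem_Iio.1 hq)]) (by rw [hwpybar, hterm])
        · exact self_mem_nhdsWithin
        · apply hdwlim.congr'
          filter_upwards [self_mem_nhdsWithin] with q hq using (hderiv_eq q hq).symm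
      have hR : HasDerivWithinAt w ybar (Ici pybar) pybar :=
        (hFder.hasDerivWithinAt).congr (fun x hx => hwF hx) (hwF self_mem_Ici)
      have h3 := hL.union hR
      rw [Iic_union_Ici] at h3
      exact h3.hasDerivAt (by simp)
    rw [show (1 : WithTop ℕ∞) = 0 + 1 from rfl, contDiffOn_succ_iff_deriv_of_isOpen isOpen_Iio]
    refine ⟨?_, ?_, ?_⟩
    · -- DifferentiableOn
      intro p hp'
      rcases lt_trichotomy p pybar with h | h | h
      · exact ((hwder p h).differentiableAt).differentiableWithinAt
      · subst h; exact hwdiff_pybar.differentiableAt.differentiableWithinAt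
      · have heq : w =ᶠ[𝓝 p] Fstar := by
          filter_upwards [isOpen_Ioi.mem_nhds h] with x hx using hwF (mem_Ici.2 (le_of_lt hx))
        exact (heq.differentiableAt_iff.2 (hFsdiff p hp')).differentiableWithinAt
    · intro hcon; simp at hcon
    · rw [contDiffOn_zero]
      intro p hp'
      rcases lt_trichotomy p pybar with h | h | h
      · -- p < pybar
        rcases ne_or_eq p 0 with h0 | h0
        · apply ContinuousAt.continuousWithinAt
          have hform : ContinuousAt (fun q => (wybar q - Fstar (δ*q) - m)/((1-δ)*q)) p := by
            apply ContinuousAt.div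
            · exact ((hODE p h).1.continuousAt.sub hgcont.continuousAt).sub continuousAt_const
            · exact continuousAt_const.mul continuousAt_id
            · exact mul_ne_zero hδ0 h0
          apply hform.congr
          have hmem : (Iio pybar ∩ ({0}ᶜ : Set ℝ)) ∈ 𝓝 p :=
            Filter.inter_mem (isOpen_Iio.mem_nhds h)
              (isOpen_compl_singleton.mem_nhds h0)
          filter_upwards [hmem] with q hq
          rw [hderiv_eq q hq.1, hdw_eq q hq.1 hq.2]
        · -- p = 0
          subst h0
          have hc0 : HasDerivAt Fstar (deriv Fstar 0) 0 := (hFsdiff 0 hp').hasDerivAt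
          set c := deriv Fstar 0 with hc
          have hgd : HasDerivAt (fun q : ℝ => Fstar (δ*q)) (c*δ) 0 := by
            have hinner : HasDerivAt (fun q : ℝ => δ*q) δ 0 := by
              simpa using (hasDerivAt_id (0:ℝ)).const_mul δ
            have houter : HasDerivAt Fstar c (δ*(0:ℝ)) := by
              rw [mul_zero]; exact hc0
            exact houter.comp 0 hinner
          have hw0 : wybar 0 = Fstar 0 + m := by
            have h2 := (hODE 0 h).2
            simp only [mul_zero, zero_mul] at h2
            linarith
          have hslopew : Tendsto (slope wybar 0) (𝓝[≠](0:ℝ)) (𝓝 (dwybar 0)) :=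
            hasDerivAt_iff_tendsto_slope.1 (hODE 0 h).1
          have hslopeg : Tendsto (slope (fun q : ℝ => Fstar (δ*q)) 0) (𝓝[≠](0:ℝ)) (𝓝 (c*δ)) :=
            hasDerivAt_iff_tendsto_slope.1 hgd
          have hlimL : Tendsto dwybar (𝓝[≠](0:ℝ)) (𝓝 ((dwybar 0 - c*δ)/(1-δ))) := by
            have hcomb : Tendsto
                (fun q => (slope wybar 0 q - slope (fun q' : ℝ => Fstar (δ*q')) 0 q)/(1-δ))
                (𝓝[≠](0:ℝ)) (𝓝 ((dwybar 0 - c*δ)/(1-δ))) :=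
              (hslopew.sub hslopeg).div_const _
            apply hcomb.congr'
            have hmem2 : ∀ᶠ q in 𝓝[≠](0:ℝ), q ∈ Iio pybar :=
              eventually_nhdsWithin_of_eventually_nhds (isOpen_Iio.eventually_mem h)
            filter_upwards [self_mem_nhdsWithin, hmem2] with q hq0 hq1
            have hq0' : q ≠ 0 := hq0
            rw [slope_def_field, slope_def_field, hdw_eq q hq1 hq0', hw0]
            field_simp
            ring
          have hdw0 : dwybar 0 = (dwybar 0 - c*δ)/(1-δ) := by
            refine aux_deriv_eq_of_tendsto (a := -1) (b := pybar) (by linarith) h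
              (fun q hq => (hODE q hq.2).1) hlimL
          have hδne : δ ≠ 0 := by linarith
          have hdc : dwybar 0 = c := by
            rw [eq_div_iff hδ0] at hdw0
            have h1 : dwybar 0 * δ = c * δ := by linear_combination -1 * hdw0
            exact mul_right_cancel₀ hδne h1
          have hcont0 : ContinuousAt dwybar 0 := by
            rw [ContinuousAt, ← nhdsNE_sup_pure 0, tendsto_sup]
            constructor
            · have := hlimL
              rwa [← hdw0] at this
            · exact tendsto_pure_nhds _ _
          apply ContinuousAt.continuousWithinAt
          apply hcont0.congr
          filter_upwards [isOpen_Iio.mem_nhds h] with q hq using (hderiv_eq q hq).symm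
      · -- p = pybar
        have hsy := h.symm
        subst hsy
        have hderiv_pybar : deriv w pybar = ybar := hwdiff_pybar.deriv
        rw [ContinuousWithinAt, hderiv_pybar]
        have hsplit : 𝓝[Iio (F' 0)] pybar ≤ 𝓝[Iio pybar] pybar ⊔ 𝓝[Ico pybar (F' 0)] pybar := by
          rw [← nhdsWithin_union]
          apply nhdsWithin_mono
          intro q hq
          rcases lt_or_ge q pybar with h' | h'
          · exact Or.inl h'
          · exact Or.inr ⟨h', hq⟩
        apply Tendsto.mono_left _ hsplit
        rw [tendsto_sup]
        constructor
        · apply hdwlim.congr'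
          filter_upwards [self_mem_nhdsWithin] with q hq using (hderiv_eq q hq).symm
        · have h1 : ContinuousWithinAt (deriv Fstar) (Ico pybar (F' 0)) pybar :=
            (hcd pybar hpybar).mono (fun q hq => hq.2)
          have h2 : deriv Fstar pybar = ybar := hFder.deriv
          rw [ContinuousWithinAt, h2] at h1
          apply h1.congr'
          filter_upwards [self_mem_nhdsWithin] with q hq
          rcases eq_or_lt_of_le hq.1 with h' | h'
          · rw [← h', hderiv_pybar, h2]
          · have heq : w =ᶠ[𝓝 q] Fstar := by
              filter_upwards [isOpen_Ioi.mem_nhds h'] with x hx using hwF (mem_Ici.2 (le_of_lt hx))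
            exact heq.deriv_eq.symm
      · -- p > pybar
        apply ContinuousAt.continuousWithinAt
        have heq : w =ᶠ[𝓝 p] Fstar := by
          filter_upwards [isOpen_Ioi.mem_nhds h] with x hx using hwF (mem_Ici.2 (le_of_lt hx))
        have hc : ContinuousAt (deriv Fstar) p := hcd.continuousAt (isOpen_Iio.mem_nhds hp')
        apply hc.congr
        exact (heq.deriv).symm
end

section
/- Let δ > 1, m > 0, ρ > 0, and let w be a strictly concave, continuously differentiable function on [0,∞) solving F*(δ w′(y)) − δ y w′(y) + w(y) + m = 0 for y ∈ (0,∞) with w(0) = 0, where F* is the concave conjugate of a strictly concave F with F(0)=0 and F*(q) = −m has a solution q = (F*)^{-1}(−m) < 0 (F* being increasing and negative on (−∞, F′(0))). Then the right derivative of w at 0 satisfies w′(0) = (F*)^{-1}(−m)/δ. In particular, if w′(0) were +∞, the ODE would force w ≡ +∞ near 0, contradicting w(0) = 0. -/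
open Set

/-- for a strictly concave, continuously differentiable solution w of the
ODE F*(δw′(y)) − δyw′(y) + w(y) + m = 0 with w(0) = 0, the right derivative at 0
(as a limit of w′) equals (F*)⁻¹(−m)/δ. -/
theorem stmt_10 (δ m ρ q0 : ℝ) (hδ : 1 < δ) (hm : 0 < m) (hρ : 0 < ρ)
    (F F' : ℝ → ℝ)
    (hconc : StrictConcaveOn ℝ (Ici 0) F) (hF0 : F 0 = 0)
    (hF' : ∀ y ≥ (0:ℝ), HasDerivWithinAt F (F' y) (Ici 0) y)
    (Fstar : ℝ → ℝ)
    (hFstar : ∀ p, Fstar p = sInf ((fun y => y * p - F y) '' Ici 0))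
    (hq0 : Fstar q0 = -m) (hq0neg : q0 < 0)
    (hFstarMono : StrictMonoOn Fstar (Iio (F' 0)))
    (hFstarNeg : ∀ p < F' 0, Fstar p < 0)
    (w w' : ℝ → ℝ)
    (hwconc : StrictConcaveOn ℝ (Ici 0) w)
    (hwcont : ContinuousOn w (Ici 0))
    (hw' : ∀ y > (0:ℝ), HasDerivAt w (w' y) y)
    (hw'cont : ContinuousOn w' (Ioi 0))
    (hODE : ∀ y > (0:ℝ), Fstar (δ * w' y) - δ * y * w' y + w y + m = 0)
    (hw0 : w 0 = 0) :
    Filter.Tendsto w' (nhdsWithin 0 (Ioi 0)) (nhds (q0 / δ)) := by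
  have hδ0 : (0:ℝ) < δ := by linarith
  -- w' is strictly antitone on (0, ∞)
  have hanti : StrictAntiOn w' (Ioi 0) := by
    intro a ha b hb hab
    have h1 : w' b < slope w a b :=
      hwconc.lt_slope_of_hasDerivAt (mem_Ici.2 (le_of_lt ha)) (mem_Ici.2 (le_of_lt hb)) hab (hw' b hb)
    have h2 : slope w a b < w' a :=
      hwconc.slope_lt_of_hasDerivAt (mem_Ici.2 (le_of_lt ha)) (mem_Ici.2 (le_of_lt hb)) hab (hw' a ha)
    linarith
  -- concavity lower bound  y * w' y ≤ w y
  have hlow : ∀ y > (0:ℝ), y * w' y ≤ w y := by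
    intro y hy
    obtain ⟨c, hc, hceq⟩ := exists_hasDerivAt_eq_slope w w' hy
      (hwcont.mono (Icc_subset_Ici_self)) (fun x hx => hw' x hx.1)
    have hcy : w' y < w' c := hanti hc.1 hy hc.2
    have : w' c = w y / y := by rw [hceq, hw0]; ring_nf
    have h2 : y * w' y ≤ y * w' c := by nlinarith
    rw [this] at h2
    calc y * w' y ≤ y * (w y / y) := h2
    _ = w y := by field_simp
  -- F lies below its tangent at 0
  have hFy : ∀ y ≥ (0:ℝ), F y ≤ F' 0 * y := by
    intro y hy
    rcases eq_or_lt_of_le hy with h | h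
    · simp [← h, hF0]
    · have := hconc.concaveOn.slope_le_of_hasDerivWithinAt (le_refl (0:ℝ))
        (le_of_lt h) h (hF' 0 le_rfl)
      rw [slope_def_field] at this
      rw [hF0] at this
      have h2 : (F y - 0) / (y - 0) ≤ F' 0 := this
      rw [div_le_iff₀ (by linarith)] at h2
      linarith [h2]
  -- Fstar vanishes at and above F' 0
  have hFstar0 : ∀ p, F' 0 ≤ p → Fstar p = 0 := by
    intro p hp
    rw [hFstar p]
    have h0mem : (0:ℝ) ∈ (fun y => y * p - F y) '' Ici 0 :=
      ⟨0, self_mem_Ici, by simp [hF0]⟩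
    have hlb : ∀ b ∈ (fun y => y * p - F y) '' Ici 0, (0:ℝ) ≤ b := by
      rintro b ⟨y, hy, rfl⟩
      have := hFy y hy
      have hy' : (0:ℝ) ≤ y := hy
      show (0:ℝ) ≤ y * p - F y
      nlinarith [mul_nonneg hy' (sub_nonneg.2 hp)]
    exact le_antisymm (csInf_le ⟨0, hlb⟩ h0mem) (le_csInf ⟨0, h0mem⟩ hlb)
  have hq0lt : q0 < F' 0 := by
    by_contra h
    push_neg at h
    have := hFstar0 q0 h
    rw [hq0] at this
    linarith
  have hODE' : ∀ y > (0:ℝ), Fstar (δ * w' y) = δ * y * w' y - w y - m := by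
    intro y hy; linarith [hODE y hy]
  -- Rule out w' unbounded near 0
  have hbdd : BddAbove (w' '' Ioi 0) := by
    by_contra hub
    obtain ⟨z, hz, hzgt⟩ := not_bddAbove_iff.1 hub (max (F' 0 / δ) 0)
    obtain ⟨y0, hy0pos, rfl⟩ := hz
    -- on (0, y0],  δ y w' y = w y + m
    have key : ∀ y ∈ Ioc (0:ℝ) y0, δ * y * w' y = w y + m := by
      intro y hy
      have hwy : max (F' 0 / δ) 0 < w' y := by
        rcases eq_or_lt_of_le hy.2 with h | h
        · rw [h]; exact hzgt
        · exact lt_trans hzgt (hanti hy.1 (lt_trans hy.1 h) h)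
      have h1 : F' 0 ≤ δ * w' y := by
        have := lt_of_le_of_lt (le_max_left (F' 0 / δ) 0) hwy
        rw [div_lt_iff₀ hδ0] at this
        linarith
      have h0 := hFstar0 _ h1
      have h2 := hODE' y hy.1
      rw [h0] at h2
      linarith
    have hwpos : ∀ y ∈ Ioc (0:ℝ) y0, 0 < w y := by
      intro y hy
      have hwy : (0:ℝ) < w' y := by
        rcases eq_or_lt_of_le hy.2 with h | h
        · rw [h]; exact lt_of_le_of_lt (le_max_right _ 0) hzgt
        · exact lt_trans (lt_of_le_of_lt (le_max_right _ 0) hzgt)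
            (hanti hy.1 (lt_trans hy.1 h) h)
      have := hlow y hy.1
      nlinarith [hy.1]
    set h : ℝ → ℝ := fun y => (w y + m) ^ δ / y with hh
    -- h is constant on (0, y0]
    have hconst : ∀ a ∈ Ioc (0:ℝ) y0, h y0 = h a := by
      intro a ha
      have hsub : Icc a y0 ⊆ Ioc (0:ℝ) y0 := fun x hx => ⟨lt_of_lt_of_le ha.1 hx.1, hx.2⟩
      have hcont : ContinuousOn h (Icc a y0) := by
        apply ContinuousOn.div
        · apply ContinuousOn.rpow_const
          · exact ((hwcont.mono (fun x hx => le_of_lt (hsub hx).1)).add continuousOn_const)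
          · intro x hx
            left
            have := hwpos x (hsub hx)
            positivity
        · exact continuousOn_id
        · intro x hx
          exact ne_of_gt (hsub hx).1
      have hderiv : ∀ x ∈ Ico a y0, HasDerivWithinAt h 0 (Ici x) x := by
        intro x hx
        have hxmem : x ∈ Ioc (0:ℝ) y0 := ⟨lt_of_lt_of_le ha.1 hx.1, le_of_lt hx.2⟩
        have hx0 : (0:ℝ) < x := hxmem.1
        have hwm : (0:ℝ) < w x + m := by linarith [hwpos x hxmem]
        have hf : HasDerivAt (fun y => (w y + m) ^ δ)
            (w' x * δ * (w x + m) ^ (δ - 1)) x :=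
          ((hw' x hx0).add_const m).rpow_const (Or.inl (ne_of_gt hwm))
        have hd : HasDerivAt h
            ((w' x * δ * (w x + m) ^ (δ - 1) * x - (w x + m) ^ δ * 1) / x ^ 2) x :=
          hf.div (hasDerivAt_id x) (ne_of_gt hx0)
        have hzero : (w' x * δ * (w x + m) ^ (δ - 1) * x - (w x + m) ^ δ * 1) / x ^ 2 = 0 := by
          have hkey := key x hxmem
          have hpow : (w x + m) ^ δ = (w x + m) ^ (δ - 1) * (w x + m) := by
            rw [← Real.rpow_add_one (ne_of_gt hwm)]
            ring_nf
          have hnum : w' x * δ * (w x + m) ^ (δ - 1) * x - (w x + m) ^ δ * 1 = 0 := by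
            rw [hpow, ← hkey]; ring
          rw [hnum, zero_div]
        rw [hzero] at hd
        exact hd.hasDerivWithinAt
      have := constant_of_has_deriv_right_zero hcont hderiv y0 ⟨ha.2, le_refl y0⟩
      exact this
    -- derive a contradiction by choosing a small enough
    have hmp : (0:ℝ) < m ^ δ := Real.rpow_pos_of_pos hm δ
    set C : ℝ := |h y0| + 1 with hC
    have hCpos : (0:ℝ) < C := by positivity
    set a : ℝ := min y0 (m ^ δ / (2 * C)) with ha
    have hapos : (0:ℝ) < a := lt_min hy0pos (by positivity)
    have hamem : a ∈ Ioc (0:ℝ) y0 := ⟨hapos, min_le_left _ _⟩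
    have heq := hconst a hamem
    -- m^δ ≤ (w a + m)^δ = h y0 * a
    have hwa : m ≤ w a + m := by linarith [hwpos a hamem]
    have h1 : m ^ δ ≤ (w a + m) ^ δ := Real.rpow_le_rpow (le_of_lt hm) hwa (by linarith)
    have h2 : (w a + m) ^ δ = h y0 * a := by
      rw [heq]
      simp only [hh]
      field_simp
    have h3 : h y0 * a ≤ C * a := by
      have : h y0 ≤ C := by
        have := le_abs_self (h y0)
        linarith
      nlinarith
    have h4 : a ≤ m ^ δ / (2 * C) := min_le_right _ _
    have h5 : C * a ≤ m ^ δ / 2 := by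
      rw [le_div_iff₀ (by norm_num : (0:ℝ) < 2)]
      calc C * a * 2 ≤ C * (m ^ δ / (2 * C)) * 2 := by nlinarith
      _ = m ^ δ := by field_simp
    nlinarith [h1, h2, h3, h5, hmp]
  -- The (finite) limit of w' at 0⁺
  set L : ℝ := sSup (w' '' Ioi 0) with hL
  have htend : Filter.Tendsto w' (nhdsWithin 0 (Ioi 0)) (nhds L) :=
    hanti.antitoneOn.tendsto_nhdsGT hbdd
  have hltL : ∀ y > (0:ℝ), w' y < L := by
    intro y hy
    have h1 : w' y < w' (y / 2) := hanti (by linarith : (0:ℝ) < y/2) hy (by linarith)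
    have h2 : w' (y / 2) ≤ L := le_csSup hbdd (mem_image_of_mem _ (by linarith : (0:ℝ) < y/2))
    linarith
  -- w → 0 and y·w' y → 0 along 0⁺
  have hwt : Filter.Tendsto w (nhdsWithin 0 (Ioi 0)) (nhds 0) := by
    have h0 : ContinuousWithinAt w (Ici 0) 0 := hwcont 0 self_mem_Ici
    rw [ContinuousWithinAt, hw0] at h0
    exact h0.mono_left (nhdsWithin_mono 0 Ioi_subset_Ici_self)
  have hyw : Filter.Tendsto (fun y => y * w' y) (nhdsWithin 0 (Ioi 0)) (nhds 0) := by
    set B : ℝ := max |w' 1| |L| with hB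
    have hlim : Filter.Tendsto (fun y : ℝ => B * y) (nhdsWithin 0 (Ioi 0)) (nhds 0) := by
      have : Filter.Tendsto (fun y : ℝ => B * y) (nhds 0) (nhds (B * 0)) :=
        (continuous_const.mul continuous_id).tendsto 0
      rw [mul_zero] at this
      exact this.mono_left nhdsWithin_le_nhds
    refine squeeze_zero_norm' ?_ hlim
    · filter_upwards [Ioo_mem_nhdsGT_of_mem (by norm_num : (0:ℝ) ∈ Ico (0:ℝ) 1)] with y hy
      have h1 : w' 1 < w' y := hanti hy.1 (by norm_num) hy.2
      have h2 : w' y ≤ L := le_of_lt (hltL y hy.1)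
      have habs : |w' y| ≤ B := by
        rw [abs_le]
        constructor
        · have := neg_abs_le (w' 1)
          have := le_max_left |w' 1| |L|
          linarith
        · have := le_abs_self L
          have := le_max_right |w' 1| |L|
          linarith
      have : ‖y * w' y‖ = y * |w' y| := by
        rw [Real.norm_eq_abs, abs_mul, abs_of_pos hy.1]
      rw [this]
      nlinarith [hy.1]
  have hg : Filter.Tendsto (fun y => δ * y * w' y - w y - m)
      (nhdsWithin 0 (Ioi 0)) (nhds (-m)) := by
    have h1 := ((hyw.const_mul δ).sub hwt).sub_const m
    simp only [mul_zero, sub_zero, zero_sub] at h1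
    apply h1.congr
    intro y
    ring
  -- Conclude δ L = q0 by trichotomy
  rcases lt_trichotomy (δ * L) q0 with hlt | heq | hgt
  · exfalso
    have hkey : ∀ y > (0:ℝ), δ * y * w' y - w y - m ≤ Fstar (δ * L) := by
      intro y hy
      have h1 : δ * w' y < δ * L := by nlinarith [hltL y hy]
      have h2 : Fstar (δ * w' y) < Fstar (δ * L) :=
        hFstarMono (by simp only [mem_Iio]; linarith) (by simp only [mem_Iio]; linarith) h1
      rw [hODE' y hy] at h2
      linarith
    have h3 : -m ≤ Fstar (δ * L) := by
      apply le_of_tendsto hg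
      filter_upwards [self_mem_nhdsWithin] with y hy
      exact hkey y hy
    have h4 : Fstar (δ * L) < Fstar q0 :=
      hFstarMono (by simp only [mem_Iio]; linarith) (by simp only [mem_Iio]; exact hq0lt) hlt
    rw [hq0] at h4
    linarith
  · have : q0 / δ = L := by field_simp [← heq]; exact heq.symm
    rw [this]
    exact htend
  · exfalso
    have hmin : q0 < min (δ * L) (F' 0) := lt_min hgt hq0lt
    set p : ℝ := (q0 + min (δ * L) (F' 0)) / 2 with hp
    have hp1 : q0 < p := by simp only [hp]; linarith
    have hp2 : p < F' 0 := by
      have := min_le_right (δ * L) (F' 0)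
      simp only [hp]; linarith
    have hp3 : p < δ * L := by
      have := min_le_left (δ * L) (F' 0)
      simp only [hp]; linarith
    have hc : -m < Fstar p := by
      rw [← hq0]
      exact hFstarMono (by simp only [mem_Iio]; exact hq0lt) (by simp only [mem_Iio]; exact hp2)
        hp1
    have hev1 : ∀ᶠ y in nhdsWithin 0 (Ioi 0), p / δ < w' y := by
      have hpd : p / δ < L := by rw [div_lt_iff₀ hδ0]; linarith
      exact htend.eventually (eventually_gt_nhds hpd)
    have hev2 : ∀ᶠ y in nhdsWithin 0 (Ioi 0), Fstar p ≤ δ * y * w' y - w y - m := by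
      filter_upwards [hev1, self_mem_nhdsWithin] with y hy1 hy2
      have hy0 : (0:ℝ) < y := hy2
      have hpw : p < δ * w' y := by
        rw [div_lt_iff₀ hδ0] at hy1
        linarith
      rw [← hODE' y hy0]
      by_cases hcase : δ * w' y < F' 0
      · exact le_of_lt (hFstarMono (by simp only [mem_Iio]; exact hp2)
          (by simp only [mem_Iio]; exact hcase) hpw)
      · push_neg at hcase
        rw [hFstar0 _ hcase]
        exact le_of_lt (hFstarNeg p hp2)
    have h3 : Fstar p ≤ -m := ge_of_tendsto hg hev2
    linarith
end

section
/- Let γ > 1, δ > 0 with γδ > 1, and define w₀(y) := −((γδ − 1)/(γ − 1))^{γ−1}·(y/δ)^γ for y ≥ 0. Then with F(y) = −y^γ and F*(p) = −(γ−1)(−p/γ)^{γ/(γ−1)} for p ≤ 0, the function w₀ satisfies the ODE F*(δ w₀′(y)) − δ y w₀′(y) + w₀(y) = 0 for all y > 0, with w₀(0) = 0, and w₀ is strictly concave and decreasing on (0,∞) with w₀ ≥ F. -/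
open Set

/-- w₀(y) = −((γδ−1)/(γ−1))^{γ−1}(y/δ)^γ solves
F*(δw₀′(y)) − δyw₀′(y) + w₀(y) = 0 on (0,∞) with w₀(0) = 0, is strictly concave and
decreasing on (0,∞), and dominates F. -/
theorem stmt_16 (γ δ : ℝ) (hγ : 1 < γ) (hδ : 0 < δ) (hγδ : 1 < γ * δ)
    (F Fstar w₀ : ℝ → ℝ)
    (hF : ∀ y, F y = -y ^ γ)
    (hFstar : ∀ p ≤ (0:ℝ), Fstar p = -(γ - 1) * ((-p) / γ) ^ (γ / (γ - 1)))
    (hw₀ : ∀ y, w₀ y = -((γ * δ - 1) / (γ - 1)) ^ (γ - 1) * (y / δ) ^ γ) :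
    (∀ y > (0:ℝ), ∃ d, HasDerivAt w₀ d y ∧ Fstar (δ * d) - δ * y * d + w₀ y = 0) ∧
    w₀ 0 = 0 ∧
    StrictConcaveOn ℝ (Ioi 0) w₀ ∧
    StrictAntiOn w₀ (Ioi 0) ∧
    (∀ y ≥ (0:ℝ), F y ≤ w₀ y) := by
  have hγ0 : (0:ℝ) < γ := by linarith
  have hγ1 : (0:ℝ) < γ - 1 := by linarith
  set t : ℝ := (γ * δ - 1) / (γ - 1) with htdef
  have ht : 0 < t := div_pos (by linarith) hγ1
  have htγ1 : (γ - 1) * t = γ * δ - 1 := by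
    rw [htdef]; field_simp
  set C : ℝ := t ^ (γ - 1) with hCdef
  have hC : 0 < C := Real.rpow_pos_of_pos ht _
  -- key inequality : C ≤ δ ^ γ
  have hCδ : C ≤ δ ^ γ := by
    have hw : (γ - 1) / γ + 1 / γ = 1 := by field_simp; ring
    have h := Real.geom_mean_le_arith_mean2_weighted
      (by positivity : (0:ℝ) ≤ (γ - 1) / γ) (by positivity : (0:ℝ) ≤ 1 / γ)
      ht.le zero_le_one hw
    have h1 : (1:ℝ) ^ ((1:ℝ) / γ) = 1 := Real.one_rpow _
    have harith : (γ - 1) / γ * t + 1 / γ * 1 = δ := by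
      rw [htdef]; field_simp; ring
    have h' : t ^ ((γ - 1) / γ) ≤ δ := by
      calc t ^ ((γ - 1) / γ) = t ^ ((γ - 1) / γ) * 1 ^ ((1:ℝ) / γ) := by rw [h1, mul_one]
        _ ≤ (γ - 1) / γ * t + 1 / γ * 1 := h
        _ = δ := harith
    have h'' := Real.rpow_le_rpow (Real.rpow_nonneg ht.le _) h' hγ0.le
    rwa [← Real.rpow_mul ht.le, div_mul_cancel₀ _ (ne_of_gt hγ0)] at h''
  -- derivative of w₀
  have hderiv : ∀ y : ℝ, 0 < y →
      HasDerivAt w₀ (-C * ((1 / δ) * γ * (y / δ) ^ (γ - 1))) y := by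
    intro y hy
    have hz : (0:ℝ) < y / δ := div_pos hy hδ
    have h1 : HasDerivAt (fun y : ℝ => y / δ) (1 / δ) y := by
      simpa using (hasDerivAt_id y).div_const δ
    have h2 := (h1.rpow_const (p := γ) (Or.inl (ne_of_gt hz))).const_mul (-C)
    refine h2.congr_of_eventuallyEq ?_
    filter_upwards with x
    rw [hw₀ x]
  constructor
  · -- the ODE
    intro y hy
    have hz : (0:ℝ) < y / δ := div_pos hy hδ
    refine ⟨-C * ((1 / δ) * γ * (y / δ) ^ (γ - 1)), hderiv y hy, ?_⟩
    set z : ℝ := y / δ with hzdef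
    have hzp : (0:ℝ) < z ^ (γ - 1) := Real.rpow_pos_of_pos hz _
    have hδd : δ * (-C * ((1 / δ) * γ * z ^ (γ - 1))) = -(C * γ * z ^ (γ - 1)) := by
      field_simp
    have hδd_le : δ * (-C * ((1 / δ) * γ * z ^ (γ - 1))) ≤ 0 := by
      rw [hδd]; nlinarith [mul_pos (mul_pos hC hγ0) hzp]
    rw [hFstar _ hδd_le, hδd, hw₀ y]
    have hneg : -(-(C * γ * z ^ (γ - 1))) / γ = C * z ^ (γ - 1) := by
      field_simp
    rw [hneg]
    have hmul : (C * z ^ (γ - 1)) ^ (γ / (γ - 1))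
        = t ^ γ * z ^ γ := by
      rw [Real.mul_rpow hC.le hzp.le, hCdef,
        ← Real.rpow_mul ht.le, ← Real.rpow_mul hz.le,
        mul_div_cancel₀ _ (ne_of_gt hγ1)]
    rw [hmul]
    have htγ : t ^ γ = C * t := by
      rw [hCdef, ← Real.rpow_add_one (ne_of_gt ht)]
      ring_nf
    have hzγ : z ^ γ = z ^ (γ - 1) * z := by
      rw [← Real.rpow_add_one (ne_of_gt hz)]; ring_nf
    have hyz : y = δ * z := by rw [hzdef]; field_simp
    have hmid : δ * y * (-C * (1 / δ * γ * z ^ (γ - 1)))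
        = -(C * γ * δ * (z ^ (γ - 1) * z)) := by
      rw [hyz]; field_simp
    rw [htγ, hzγ, hmid]
    linear_combination (-C * (z ^ (γ - 1) * z)) * htγ1
  refine ⟨?_, ?_, ?_, ?_⟩
  · rw [hw₀ 0, zero_div, Real.zero_rpow (ne_of_gt hγ0), mul_zero]
  · -- strict concavity
    constructor
    · exact convex_Ioi 0
    · intro x hx y hy hxy a b ha hb hab
      have hx' : (0:ℝ) ≤ x / δ := (div_pos hx hδ).le
      have hy' : (0:ℝ) ≤ y / δ := (div_pos hy hδ).le
      have hxy' : x / δ ≠ y / δ := by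
        intro h
        apply hxy
        field_simp at h
        exact h
      have h := (strictConvexOn_rpow hγ).2 hx' hy' hxy' ha hb hab
      simp only [smul_eq_mul] at h ⊢
      have habx : (a * x + b * y) / δ = a * (x / δ) + b * (y / δ) := by ring
      rw [hw₀ (a * x + b * y), hw₀ x, hw₀ y, habx]
      nlinarith [mul_lt_mul_of_pos_left h hC]
  · -- strict antitonicity
    intro a ha b hb hab
    have ha' : (0:ℝ) < a := ha
    have h : (a / δ) ^ γ < (b / δ) ^ γ :=
      Real.rpow_lt_rpow (div_pos ha' hδ).le (by gcongr) hγ0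
    rw [hw₀ a, hw₀ b]
    nlinarith [mul_lt_mul_of_pos_left h hC]
  · -- domination
    intro y hy
    rw [hF y, hw₀ y, Real.div_rpow hy (le_of_lt hδ)]
    have hδγ : (0:ℝ) < δ ^ γ := Real.rpow_pos_of_pos hδ _
    have hyγ : (0:ℝ) ≤ y ^ γ := Real.rpow_nonneg hy _
    have h1 : C * (y ^ γ / δ ^ γ) ≤ δ ^ γ * (y ^ γ / δ ^ γ) :=
      mul_le_mul_of_nonneg_right hCδ (div_nonneg hyγ hδγ.le)
    have h2 : δ ^ γ * (y ^ γ / δ ^ γ) = y ^ γ := by field_simp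
    nlinarith [h1, h2]
end

section
/- Let γ > 1, δ ∈ (0,1) with γδ > 1, m > 0, F(y) = −y^γ, and w₀(y) = −((γδ−1)/(γ−1))^{γ−1}(y/δ)^γ. Then the equation F(y) = w₀(y) − m has the unique positive solution ỹ = m^{1/γ}·(1 − (1/δ)·((γδ−1)/(δ(γ−1)))^{γ−1})^{−1/γ}, and moreover m^{1/γ} < ỹ < ȳ where ȳ = (m/((γ−1)δ^{γ/(γ−1)} − δγ + 1))^{1/γ}. In particular the constant 1 − (1/δ)·((γδ−1)/(δ(γ−1)))^{γ−1} is strictly positive. -/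
open Set

noncomputable def fS17 (r s : ℝ) : ℝ :=
  (2*r+1)*s^(r+1) - 2*(r+1)*s^r - (r+1)*s + (r+2)

noncomputable def f1S17 (r s : ℝ) : ℝ :=
  (2*r+1)*((r+1)*s^r) - 2*(r+1)*(r*s^(r-1)) - (r+1)

noncomputable def f2S17 (r s : ℝ) : ℝ :=
  (2*r+1)*((r+1)*(r*s^(r-1))) - 2*(r+1)*(r*((r-1)*s^(r-1-1)))

lemma hasDerivAt_fS17 (r : ℝ) {s : ℝ} (hs : s ≠ 0) :
    HasDerivAt (fS17 r) (f1S17 r s) s := by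
  unfold fS17
  have h1 : HasDerivAt (fun u : ℝ => u ^ (r+1)) ((r+1) * s ^ r) s := by
    have := Real.hasDerivAt_rpow_const (x := s) (p := r+1) (Or.inl hs)
    simpa using this
  have h2 : HasDerivAt (fun u : ℝ => u ^ r) (r * s ^ (r-1)) s :=
    Real.hasDerivAt_rpow_const (Or.inl hs)
  have H := (((h1.const_mul (2*r+1)).sub (h2.const_mul (2*(r+1)))).sub
    ((hasDerivAt_id s).const_mul (r+1))).add_const (r+2)
  rw [show f1S17 r s
      = (2*r+1)*((r+1)*s^r) - 2*(r+1)*(r*s^(r-1)) - (r+1)*1 by rw [f1S17]; ring]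
  exact H

lemma hasDerivAt_f1S17 (r : ℝ) {s : ℝ} (hs : s ≠ 0) :
    HasDerivAt (f1S17 r) (f2S17 r s) s := by
  unfold f1S17
  have h1 : HasDerivAt (fun u : ℝ => u ^ r) (r * s ^ (r-1)) s :=
    Real.hasDerivAt_rpow_const (Or.inl hs)
  have h2 : HasDerivAt (fun u : ℝ => u ^ (r-1)) ((r-1) * s ^ (r-1-1)) s :=
    Real.hasDerivAt_rpow_const (Or.inl hs)
  have H := (((h1.const_mul (r+1)).const_mul (2*r+1)).sub
    (((h2.const_mul r).const_mul (2*(r+1))))).sub_const (r+1)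
  rw [show f2S17 r s
      = (2*r+1)*((r+1)*(r*s^(r-1))) - 2*(r+1)*(r*((r-1)*s^(r-1-1))) from rfl]
  exact H

lemma contAt_fS17 (r : ℝ) (hr : 0 < r) (u : ℝ) : ContinuousAt (fS17 r) u := by
  have c1 : ContinuousAt (fun v : ℝ => v ^ (r+1)) u :=
    Real.continuousAt_rpow_const u (r+1) (Or.inr (by linarith))
  have c2 : ContinuousAt (fun v : ℝ => v ^ r) u :=
    Real.continuousAt_rpow_const u r (Or.inr hr.le)
  unfold fS17
  exact (((c1.const_mul _).sub (c2.const_mul _)).sub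
    ((continuousAt_id.const_mul _ : ContinuousAt (fun v : ℝ => (r+1)*v) u))).add
    continuousAt_const

lemma f1S17_neg (r : ℝ) (hr : 0 < r) {s : ℝ} (hs0 : 0 < s) (hs1 : s < 1)
    (hs₀ : 2*(r-1) < (2*r+1)*s) : f1S17 r s < 0 := by
  have h2r1 : (0:ℝ) < 2*r+1 := by linarith
  have hmono : StrictMonoOn (f1S17 r) (Icc s 1) := by
    apply strictMonoOn_of_deriv_pos (convex_Icc s 1)
    · intro u hu
      exact (hasDerivAt_f1S17 r (by linarith [hu.1] : u ≠ 0)).continuousAt.continuousWithinAt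
    · intro u hu
      rw [interior_Icc] at hu
      have hu0 : 0 < u := lt_trans hs0 hu.1
      rw [(hasDerivAt_f1S17 r hu0.ne').deriv]
      have key : f2S17 r u = (r+1)*r*u^(r-1-1)*((2*r+1)*u - 2*(r-1)) := by
        rw [f2S17]
        have : u^(r-1) = u^(r-1-1) * u := by
          rw [← Real.rpow_add_one hu0.ne' (r-1-1)]; ring_nf
        rw [this]; ring
      rw [key]
      have h1 : (0:ℝ) < u^(r-1-1) := Real.rpow_pos_of_pos hu0 _
      have h2 : 2*(r-1) < (2*r+1)*u :=
        lt_trans hs₀ (mul_lt_mul_of_pos_left hu.1 h2r1)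
      exact mul_pos (mul_pos (mul_pos (by linarith) hr) h1) (by linarith)
  have h1 : f1S17 r 1 = 0 := by
    rw [f1S17, Real.one_rpow, Real.one_rpow]; ring
  have := hmono (left_mem_Icc.2 hs1.le) (right_mem_Icc.2 hs1.le) hs1
  linarith [this]

lemma fS17_pos (r : ℝ) (hr : 0 < r) {s : ℝ} (hs0 : 0 < s) (hs1 : s < 1)
    (hs₀ : 2*(r-1) ≤ (2*r+1)*s) : 0 < fS17 r s := by
  have h2r1 : (0:ℝ) < 2*r+1 := by linarith
  have hanti : StrictAntiOn (fS17 r) (Icc s 1) := by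
    apply strictAntiOn_of_deriv_neg (convex_Icc s 1)
    · exact fun u _ => (contAt_fS17 r hr u).continuousWithinAt
    · intro u hu
      rw [interior_Icc] at hu
      have hu0 : 0 < u := lt_trans hs0 hu.1
      rw [(hasDerivAt_fS17 r hu0.ne').deriv]
      exact f1S17_neg r hr hu0 hu.2
        (lt_of_le_of_lt hs₀ (mul_lt_mul_of_pos_left hu.1 h2r1))
  have h1 : fS17 r 1 = 0 := by
    rw [fS17, Real.one_rpow, Real.one_rpow]; ring
  have := hanti (left_mem_Icc.2 hs1.le) (right_mem_Icc.2 hs1.le) hs1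
  linarith [this]

lemma chiS17_pos (r : ℝ) (hr : 0 < r) {s : ℝ} (hs0 : 0 < s) (hs1 : s < 1) :
    0 < fS17 r s := by
  rcases le_or_gt (2*(r-1)) ((2*r+1)*s) with h | h
  · exact fS17_pos r hr hs0 hs1 h
  · have hr1 : 1 < r := by nlinarith
    have h2r1 : (0:ℝ) < 2*r+1 := by linarith
    set s₀ : ℝ := 2*(r-1)/(2*r+1) with hs₀def
    have hs₀mul : (2*r+1)*s₀ = 2*(r-1) := by rw [hs₀def]; field_simp
    have hs₀pos : 0 < s₀ := div_pos (by linarith) h2r1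
    have hs₀lt1 : s₀ < 1 := by rw [hs₀def, div_lt_one h2r1]; linarith
    have hss₀ : s < s₀ := by
      rw [hs₀def, lt_div_iff₀ h2r1]; linarith [h]
    have hconc : StrictConcaveOn ℝ (Icc 0 s₀) (fS17 r) := by
      apply strictConcaveOn_of_deriv2_neg (convex_Icc 0 s₀)
      · exact fun u _ => (contAt_fS17 r hr u).continuousWithinAt
      · intro u hu
        rw [interior_Icc] at hu
        have hu0 : 0 < u := hu.1
        have he : deriv (fS17 r) =ᶠ[nhds u] f1S17 r := by
          filter_upwards [Ioi_mem_nhds hu0] with v hv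
          exact (hasDerivAt_fS17 r (ne_of_gt hv)).deriv
        have hit : deriv^[2] (fS17 r) u = f2S17 r u := by
          show deriv (deriv (fS17 r)) u = f2S17 r u
          rw [Filter.EventuallyEq.deriv_eq he]
          exact (hasDerivAt_f1S17 r hu0.ne').deriv
        rw [hit]
        have key : f2S17 r u = (r+1)*r*u^(r-1-1)*((2*r+1)*u - 2*(r-1)) := by
          rw [f2S17]
          have : u^(r-1) = u^(r-1-1) * u := by
            rw [← Real.rpow_add_one hu0.ne' (r-1-1)]; ring_nf
          rw [this]; ring
        rw [key]
        have h1 : (0:ℝ) < u^(r-1-1) := Real.rpow_pos_of_pos hu0 _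
        have h2 : (2*r+1)*u < 2*(r-1) := by
          calc (2*r+1)*u < (2*r+1)*s₀ := mul_lt_mul_of_pos_left hu.2 h2r1
          _ = 2*(r-1) := hs₀mul
        exact mul_neg_of_pos_of_neg
          (mul_pos (mul_pos (by linarith) hr) h1) (by linarith)
    have hf0 : fS17 r 0 = r + 2 := by
      rw [fS17, Real.zero_rpow (by linarith : r+1 ≠ 0), Real.zero_rpow hr.ne']; ring
    have hfs₀ : 0 < fS17 r s₀ := by
      apply fS17_pos r hr hs₀pos hs₀lt1
      rw [hs₀mul]
    have hb0 : 0 < s/s₀ := by positivity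
    have hb1 : s/s₀ < 1 := (div_lt_one hs₀pos).2 hss₀
    have hcomb := hconc.concaveOn.2
      (left_mem_Icc.2 hs₀pos.le) (right_mem_Icc.2 hs₀pos.le)
      (show (0:ℝ) ≤ 1 - s/s₀ by linarith) hb0.le (by ring)
    rw [smul_zero, zero_add, smul_eq_mul, smul_eq_mul, smul_eq_mul,
      div_mul_cancel₀ _ hs₀pos.ne'] at hcomb
    nlinarith [hcomb, hf0, mul_pos hb0 hfs₀,
      mul_nonneg (by linarith : (0:ℝ) ≤ 1 - s/s₀) (by linarith : (0:ℝ) ≤ r+2)]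

lemma bernS17 (γ δ : ℝ) (hγ : 1 < γ) (hδ0 : 0 < δ) (hδ1 : δ < 1) :
    γ*δ - 1 < (γ-1) * δ^(γ/(γ-1)) := by
  have hr : 0 < γ - 1 := by linarith
  have hq : 1 < γ/(γ-1) := (one_lt_div hr).2 (by linarith)
  have hb := one_add_mul_self_lt_rpow_one_add (s := δ - 1)
    (by linarith) (by intro h; apply absurd (by linarith : δ = 1); linarith [hδ1]) hq
  rw [show (1:ℝ) + (δ-1) = δ by ring] at hb
  have h2 : (γ-1) * (1 + γ/(γ-1)*(δ-1)) < (γ-1) * δ^(γ/(γ-1)) :=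
    mul_lt_mul_of_pos_left hb hr
  have h3 : (γ-1) * (1 + γ/(γ-1)*(δ-1)) = γ*δ - 1 := by
    field_simp
    ring
  linarith [h2, h3]

lemma mainS17 (γ δ : ℝ) (hγ : 1 < γ) (hδ0 : 0 < δ) (hδ1 : δ < 1) (hγδ : 1 < γ*δ) :
    ((γ*δ - 1)/(γ-1))^(γ-1) < δ^γ * (γ*δ - (γ-1) * δ^(γ/(γ-1))) := by
  obtain ⟨r, rfl⟩ : ∃ r, γ = r + 1 := ⟨γ-1, by ring⟩
  have hr : 0 < r := by linarith
  have hγ0 : (0:ℝ) < r + 1 := by linarith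
  rw [show r+1-1 = r from by ring, show (r+1)/r = 1 + r⁻¹ from by field_simp]
  obtain ⟨s, hsdef⟩ : ∃ s:ℝ, s = δ^r⁻¹ := ⟨_, rfl⟩
  have hs0 : 0 < s := hsdef ▸ Real.rpow_pos_of_pos hδ0 _
  have hs1 : s < 1 := hsdef ▸ Real.rpow_lt_one hδ0.le hδ1 (by positivity)
  have hsr : s^r = δ := by
    rw [hsdef, ← Real.rpow_mul hδ0.le, inv_mul_cancel₀ hr.ne', Real.rpow_one]
  obtain ⟨σ, hσdef⟩ : ∃ σ:ℝ→ℝ, σ = fun u =>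
      (r+1+1)*Real.log u + r⁻¹*Real.log (r+1 - r*u) + Real.log r
        - Real.log ((r+1)*u^r - 1) := ⟨_, rfl⟩
  have hfacts : ∀ u, s ≤ u → u ≤ 1 → 0 < u ∧ 0 < r+1 - r*u ∧ 0 < (r+1)*u^r - 1 := by
    intro u h1 h2
    have hu0 : 0 < u := lt_of_lt_of_le hs0 h1
    refine ⟨hu0, ?_, ?_⟩
    · nlinarith [mul_le_mul_of_nonneg_left h2 hr.le]
    · have : δ ≤ u^r := by
        rw [← hsr]; exact Real.rpow_le_rpow hs0.le h1 hr.le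
      nlinarith [mul_le_mul_of_nonneg_left this hγ0.le]
  have hder : ∀ u, s ≤ u → u ≤ 1 → HasDerivAt σ
      ((r+1+1)*u⁻¹ + r⁻¹*(-r/(r+1-r*u)) - (r+1)*(r*u^(r-1))/((r+1)*u^r-1)) u := by
    intro u h1 h2
    obtain ⟨hu0, hg1, hg2⟩ := hfacts u h1 h2
    have d1 : HasDerivAt (fun u : ℝ => (r+1+1)*Real.log u) ((r+1+1)*u⁻¹) u :=
      (Real.hasDerivAt_log hu0.ne').const_mul (r+1+1)
    have d2 : HasDerivAt (fun u : ℝ => r+1 - r*u) (-r) u := by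
      simpa using ((hasDerivAt_id u).const_mul r).const_sub (r+1)
    have d2' : HasDerivAt (fun u : ℝ => r⁻¹*Real.log (r+1 - r*u))
        (r⁻¹*(-r/(r+1-r*u))) u := (d2.log hg1.ne').const_mul r⁻¹
    have d3 : HasDerivAt (fun u : ℝ => (r+1)*u^r - 1) ((r+1)*(r*u^(r-1))) u :=
      ((Real.hasDerivAt_rpow_const (Or.inl hu0.ne')).const_mul (r+1)).sub_const 1
    have d3' : HasDerivAt (fun u : ℝ => Real.log ((r+1)*u^r - 1))
        ((r+1)*(r*u^(r-1))/((r+1)*u^r-1)) u := d3.log hg2.ne'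
    rw [hσdef]
    exact ((d1.add d2').add_const (Real.log r)).sub d3'
  have key : ∀ u A : ℝ, 0 < u → 0 < r+1-r*u → 0 < (r+1)*A - 1 →
      (r+1+1)*u⁻¹ + r⁻¹*(-r/(r+1-r*u)) - (r+1)*(r*(A/u))/((r+1)*A-1)
        = -((r+1) * ((2*r+1)*(A*u) - 2*(r+1)*A - (r+1)*u + (r+2)))
          / (u*((r+1)-r*u)*((r+1)*A-1)) := by
    intro u A hu0 h1 h2
    field_simp
    ring
  have hderneg : ∀ u, u ∈ Ioo s 1 →
      (r+1+1)*u⁻¹ + r⁻¹*(-r/(r+1-r*u)) - (r+1)*(r*u^(r-1))/((r+1)*u^r-1) < 0 := by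
    intro u hu
    obtain ⟨hu0, hg1, hg2⟩ := hfacts u hu.1.le hu.2.le
    have hchi := chiS17_pos r hr hu0 hu.2
    rw [fS17, Real.rpow_add_one hu0.ne' r] at hchi
    have hA : u^(r-1) = u^r / u := by
      rw [Real.rpow_sub hu0, Real.rpow_one]
    rw [hA, key u (u^r) hu0 hg1 hg2]
    apply div_neg_of_neg_of_pos
    · nlinarith [mul_pos hγ0 hchi]
    · have : (0:ℝ) < (r+1) - r*u := hg1
      positivity
  have hσ1 : σ 1 = 0 := by
    rw [hσdef]
    norm_num
  have hanti : StrictAntiOn σ (Icc s 1) := by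
    apply strictAntiOn_of_deriv_neg (convex_Icc s 1)
    · exact fun u hu => (hder u hu.1 hu.2).continuousAt.continuousWithinAt
    · intro u hu
      rw [interior_Icc] at hu
      rw [(hder u hu.1.le hu.2.le).deriv]
      exact hderneg u hu
  have hσs : 0 < σ s := by
    have := hanti (left_mem_Icc.2 hs1.le) (right_mem_Icc.2 hs1.le) hs1
    rw [hσ1] at this
    linarith
  obtain ⟨hs0', hgs1, hgs2⟩ := hfacts s le_rfl hs1.le
  have ha0 : 0 < ((r+1)*δ - 1)/r := div_pos (by nlinarith) hr
  have hT0 : 0 < s^(r+1+1) * (r+1-r*s)^r⁻¹ :=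
    mul_pos (Real.rpow_pos_of_pos hs0 _) (Real.rpow_pos_of_pos hgs1 _)
  have hlogT : Real.log (s^(r+1+1) * (r+1-r*s)^r⁻¹)
      = (r+1+1)*Real.log s + r⁻¹*Real.log (r+1-r*s) := by
    rw [Real.log_mul (by positivity) (by positivity),
      Real.log_rpow hs0, Real.log_rpow hgs1]
  have hloga : Real.log (((r+1)*δ - 1)/r)
      = Real.log ((r+1)*s^r - 1) - Real.log r := by
    rw [hsr, Real.log_div (by nlinarith) hr.ne']
  have haT : ((r+1)*δ - 1)/r < s^(r+1+1) * (r+1-r*s)^r⁻¹ := by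
    rw [← Real.log_lt_log_iff ha0 hT0, hloga, hlogT]
    have h5 : σ s = (r+1+1)*Real.log s + r⁻¹*Real.log (r+1 - r*s) + Real.log r
        - Real.log ((r+1)*s^r - 1) := by rw [hσdef]
    linarith [hσs, h5]
  have haTr : (((r+1)*δ - 1)/r)^r < (s^(r+1+1) * (r+1-r*s)^r⁻¹)^r :=
    Real.rpow_lt_rpow ha0.le haT hr
  have hTr : (s^(r+1+1) * (r+1-r*s)^r⁻¹)^r
      = δ^(r+1) * ((r+1)*δ - r * δ^(1+r⁻¹)) := by
    rw [Real.mul_rpow (by positivity) (by positivity)]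
    rw [← Real.rpow_mul hs0.le, ← Real.rpow_mul hgs1.le,
      inv_mul_cancel₀ hr.ne', Real.rpow_one]
    rw [show (r+1+1)*r = r*(r+1+1) from by ring, Real.rpow_mul hs0.le, hsr]
    have hds : δ^(1+r⁻¹) = δ * s := by
      rw [Real.rpow_add hδ0, Real.rpow_one, hsdef]
    rw [hds, show (r:ℝ)+1+1 = (r+1)+1 from by ring, Real.rpow_add_one hδ0.ne']
    ring
  rw [hTr] at haTr
  exact haTr

lemma algS17_c (A D : ℝ) (hD : 0 < D) (hc : 0 < 1 - A/D) : 0 < D - A := by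
  have := mul_pos hc hD
  rw [sub_mul, one_mul, div_mul_cancel₀ _ hD.ne'] at this
  linarith

lemma algS17_1 (A D m : ℝ) (hD : 0 < D) (hc : 0 < 1 - A/D) :
    -(m * (1 - A/D)⁻¹) = -A * (m * (1 - A/D)⁻¹ / D) - m := by
  have hDA := algS17_c A D hD hc
  field_simp
  ring

lemma algS17_2 (A D m Y : ℝ) (hD : 0 < D) (hc : 0 < 1 - A/D)
    (heq : -Y = -A*(Y/D) - m) : Y = m * (1 - A/D)⁻¹ := by
  have h2 : Y*(1 - A/D) = m := by linear_combination -heq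
  rw [← h2, mul_inv_cancel_right₀ hc.ne']

/-- the equation F(y) = w₀(y) − m has the unique positive solution ỹ, with
m^{1/γ} < ỹ < ȳ; in particular 1 − (1/δ)((γδ−1)/(δ(γ−1)))^{γ−1} > 0. -/
theorem stmt_17 (γ δ m : ℝ) (hγ : 1 < γ) (hδ : δ ∈ Ioo (0:ℝ) 1) (hγδ : 1 < γ * δ)
    (hm : 0 < m)
    (F w₀ : ℝ → ℝ)
    (hF : ∀ y, F y = -y ^ γ)
    (hw₀ : ∀ y, w₀ y = -((γ * δ - 1) / (γ - 1)) ^ (γ - 1) * (y / δ) ^ γ)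
    (ytilde ybar : ℝ)
    (hyt : ytilde = m ^ (1/γ) *
      (1 - (1/δ) * ((γ * δ - 1) / (δ * (γ - 1))) ^ (γ - 1)) ^ (-(1/γ)))
    (hyb : ybar = (m / ((γ - 1) * δ ^ (γ / (γ - 1)) - δ * γ + 1)) ^ (1/γ)) :
    0 < 1 - (1/δ) * ((γ * δ - 1) / (δ * (γ - 1))) ^ (γ - 1) ∧
    F ytilde = w₀ ytilde - m ∧
    (∀ y > (0:ℝ), F y = w₀ y - m → y = ytilde) ∧
    m ^ (1/γ) < ytilde ∧ ytilde < ybar := by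
  obtain ⟨hδ0, hδ1⟩ := hδ
  have hγ0 : (0:ℝ) < γ := by linarith
  have hr : (0:ℝ) < γ - 1 := by linarith
  have hγδ1 : (0:ℝ) < γ*δ - 1 := by linarith
  have hδγ0 : (0:ℝ) < δ^γ := Real.rpow_pos_of_pos hδ0 _
  have hA0 : (0:ℝ) < ((γ*δ - 1)/(γ-1))^(γ-1) :=
    Real.rpow_pos_of_pos (by positivity) _
  have hδγsplit : δ^(γ-1) * δ = δ^γ := by
    rw [← Real.rpow_add_one hδ0.ne' (γ-1)]
    norm_num
  have hE : (1/δ) * ((γ * δ - 1) / (δ * (γ - 1))) ^ (γ - 1)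
      = ((γ*δ - 1)/(γ-1))^(γ-1) / δ^γ := by
    rw [show (γ * δ - 1) / (δ * (γ - 1)) = ((γ*δ-1)/(γ-1))/δ from by
      rw [div_div]; ring_nf]
    rw [Real.div_rpow (by positivity) hδ0.le]
    rw [← hδγsplit]
    ring
  have hmain := mainS17 γ δ hγ hδ0 hδ1 hγδ
  have hbern := bernS17 γ δ hγ hδ0 hδ1
  have hK0 : 0 < (γ - 1) * δ ^ (γ / (γ - 1)) - δ * γ + 1 := by nlinarith
  have hAδ : ((γ*δ - 1)/(γ-1))^(γ-1) < δ^γ := by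
    nlinarith [hmain, mul_pos hδγ0 (show (0:ℝ) < 1 - (γ*δ - (γ-1)*δ^(γ/(γ-1))) by nlinarith)]
  have hgoal1 : 0 < 1 - (1/δ) * ((γ * δ - 1) / (δ * (γ - 1))) ^ (γ - 1) := by
    rw [hE]
    have : ((γ*δ - 1)/(γ-1))^(γ-1)/δ^γ < 1 := (div_lt_one hδγ0).2 hAδ
    linarith
  have hcdef : 1 - (1/δ) * ((γ * δ - 1) / (δ * (γ - 1))) ^ (γ - 1)
      = 1 - ((γ*δ - 1)/(γ-1))^(γ-1)/δ^γ := by rw [hE]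
  have hc0 : 0 < 1 - ((γ*δ - 1)/(γ-1))^(γ-1)/δ^γ := by rw [← hcdef]; exact hgoal1
  have hc1 : 1 - ((γ*δ - 1)/(γ-1))^(γ-1)/δ^γ < 1 := by
    have : 0 < ((γ*δ - 1)/(γ-1))^(γ-1)/δ^γ := by positivity
    linarith
  have hyt' : ytilde = m^(1/γ) * (1 - ((γ*δ - 1)/(γ-1))^(γ-1)/δ^γ)^(-(1/γ)) := by
    rw [hyt, hcdef]
  have hytpos : 0 < ytilde := by
    rw [hyt']
    exact mul_pos (Real.rpow_pos_of_pos hm _) (Real.rpow_pos_of_pos hc0 _)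
  have hytγ : ytilde^γ = m * (1 - ((γ*δ - 1)/(γ-1))^(γ-1)/δ^γ)⁻¹ := by
    rw [hyt', Real.mul_rpow (Real.rpow_pos_of_pos hm _).le (Real.rpow_pos_of_pos hc0 _).le,
      ← Real.rpow_mul hm.le, ← Real.rpow_mul hc0.le,
      show 1/γ*γ = 1 from by field_simp, show -(1/γ)*γ = -1 from by field_simp,
      Real.rpow_one, Real.rpow_neg_one]
  have hroot : ∀ z:ℝ, 0 < z → (z^γ)^γ⁻¹ = z := by
    intro z hz
    rw [← Real.rpow_mul hz.le, mul_inv_cancel₀ hγ0.ne', Real.rpow_one]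
  refine ⟨hgoal1, ?_, ?_, ?_, ?_⟩
  · rw [hF, hw₀, Real.div_rpow hytpos.le hδ0.le, hytγ]
    exact algS17_1 _ _ m hδγ0 hc0
  · intro y hy heq
    rw [hF, hw₀, Real.div_rpow hy.le hδ0.le] at heq
    have h8 : y^γ = ytilde^γ := by
      rw [hytγ]
      exact algS17_2 _ _ m (y^γ) hδγ0 hc0 heq
    calc y = (y^γ)^γ⁻¹ := (hroot y hy).symm
    _ = (ytilde^γ)^γ⁻¹ := by rw [h8]
    _ = ytilde := hroot _ hytpos
  · rw [hyt']
    have h10 : 1 < (1 - ((γ*δ - 1)/(γ-1))^(γ-1)/δ^γ)^(-(1/γ)) :=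
      (Real.one_lt_rpow_iff_of_pos hc0).2 (Or.inr ⟨hc1, neg_lt_zero.2 (by positivity)⟩)
    nth_rewrite 1 [← mul_one (m^(1/γ))]
    exact mul_lt_mul_of_pos_left h10 (Real.rpow_pos_of_pos hm _)
  · have hKc : (γ - 1) * δ ^ (γ / (γ - 1)) - δ * γ + 1
        < 1 - ((γ*δ - 1)/(γ-1))^(γ-1)/δ^γ := by
      have h11 : ((γ*δ - 1)/(γ-1))^(γ-1)/δ^γ < γ*δ - (γ-1)*δ^(γ/(γ-1)) := by
        rw [div_lt_iff₀ hδγ0]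
        exact hmain.trans_eq (mul_comm _ _)
      linarith
    have h12 : ytilde = (m / (1 - ((γ*δ - 1)/(γ-1))^(γ-1)/δ^γ))^(1/γ) := by
      rw [hyt', Real.div_rpow hm.le hc0.le, Real.rpow_neg hc0.le]
      exact (div_eq_mul_inv _ _).symm
    rw [hyb, h12]
    apply Real.rpow_lt_rpow (by positivity)
    · exact div_lt_div_of_pos_left hm hK0 hKc
    · positivity
end

section
/- Let μ ≥ 1 and let u : [0,∞) → ℝ be upper semicontinuous with sup_{y≥0} |u(y)|/(1+y^μ) < ∞ and u(0) ≤ 0. Define ũ : ℝ → ℝ by ũ(y) := u(y) for y ≥ 0 and ũ(y) := (inf_{x ≥ 0} { u(x)/(1+|x|^μ) + x/|y| })·(1+|y|^μ) for y < 0. Then ũ is upper semicontinuous on ℝ, agrees with u on [0,∞), satisfies sup_{y∈ℝ} |ũ(y)|/(1+|y|^μ) < ∞, and ũ(y) ≤ u(0)(1+|y|^μ) ≤ 0 for all y < 0. -/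
open Set

/-- the Tietze-type extension ũ of an upper semicontinuous u : [0,∞) → ℝ with
polynomial growth and u(0) ≤ 0 is upper semicontinuous on ℝ, agrees with u on [0,∞), has the
same growth, and satisfies ũ(y) ≤ u(0)(1+|y|^μ) ≤ 0 for y < 0. -/
theorem stmt_19 (μ : ℝ) (hμ : 1 ≤ μ)
    (u : ℝ → ℝ)
    (husc : UpperSemicontinuousOn u (Ici 0))
    (hbdd : ∃ C : ℝ, ∀ y ≥ (0:ℝ), |u y| ≤ C * (1 + y ^ μ))
    (hu0 : u 0 ≤ 0)
    (utilde : ℝ → ℝ)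
    (hutilde : ∀ y, utilde y =
      if 0 ≤ y then u y
      else (sInf ((fun x => u x / (1 + |x| ^ μ) + x / |y|) '' Ici 0)) * (1 + |y| ^ μ)) :
    UpperSemicontinuous utilde ∧
    EqOn utilde u (Ici 0) ∧
    (∃ C : ℝ, ∀ y : ℝ, |utilde y| ≤ C * (1 + |y| ^ μ)) ∧
    (∀ y < (0:ℝ), utilde y ≤ u 0 * (1 + |y| ^ μ) ∧ u 0 * (1 + |y| ^ μ) ≤ 0) := by
  obtain ⟨C, hC⟩ := hbdd
  have hμ0 : (0:ℝ) < μ := by linarith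
  have hP : ∀ y : ℝ, (0:ℝ) < 1 + |y| ^ μ := fun y => by
    have := Real.rpow_nonneg (abs_nonneg y) μ; linarith
  have hPx : ∀ x : ℝ, 0 ≤ x → (0:ℝ) < 1 + x ^ μ := fun x hx => by
    have := Real.rpow_nonneg hx μ; linarith
  -- lower bound on elements of the image set
  have hlow : ∀ y : ℝ, ∀ b ∈ ((fun x => u x / (1 + |x| ^ μ) + x / |y|) '' Ici 0), -C ≤ b := by
    rintro y b ⟨x, hx, rfl⟩
    have hx0 : (0:ℝ) ≤ x := hx
    have habs : |x| = x := abs_of_nonneg hx0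
    have h1 : -(C * (1 + x ^ μ)) ≤ u x := neg_le_of_abs_le (hC x hx0)
    have h2 : -C ≤ u x / (1 + x ^ μ) := by
      rw [neg_le, ← neg_div]
      exact (div_le_iff₀ (hPx x hx0)).2 (by nlinarith [hPx x hx0])
    have h3 : (0:ℝ) ≤ x / |y| := div_nonneg hx0 (abs_nonneg y)
    show -C ≤ u x / (1 + |x| ^ μ) + x / |y|
    rw [habs]; linarith
  have hbb : ∀ y : ℝ, BddBelow ((fun x => u x / (1 + |x| ^ μ) + x / |y|) '' Ici 0) :=
    fun y => ⟨-C, hlow y⟩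
  have hne : ∀ y : ℝ, ((fun x => u x / (1 + |x| ^ μ) + x / |y|) '' Ici 0).Nonempty :=
    fun y => ⟨_, ⟨0, self_mem_Ici, rfl⟩⟩
  have hz : (0:ℝ) ^ μ = 0 := Real.zero_rpow hμ0.ne'
  have hle0 : ∀ y : ℝ, sInf ((fun x => u x / (1 + |x| ^ μ) + x / |y|) '' Ici 0) ≤ u 0 := by
    intro y
    have : u 0 / (1 + |(0:ℝ)| ^ μ) + 0 / |y| = u 0 := by
      simp [hz]
    calc sInf _ ≤ u 0 / (1 + |(0:ℝ)| ^ μ) + 0 / |y| :=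
          csInf_le (hbb y) ⟨0, self_mem_Ici, rfl⟩
      _ = u 0 := this
  have hgeC : ∀ y : ℝ, -C ≤ sInf ((fun x => u x / (1 + |x| ^ μ) + x / |y|) '' Ici 0) :=
    fun y => le_csInf (hne y) (hlow y)
  have hneg : ∀ y : ℝ, y < 0 → utilde y =
      (sInf ((fun x => u x / (1 + |x| ^ μ) + x / |y|) '' Ici 0)) * (1 + |y| ^ μ) := by
    intro y hy; rw [hutilde y, if_neg (not_le.2 hy)]
  have hdle : ∀ y : ℝ, y < 0 → utilde y ≤ u 0 * (1 + |y| ^ μ) := by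
    intro y hy
    rw [hneg y hy]
    exact mul_le_mul_of_nonneg_right (hle0 y) (hP y).le
  have heq : EqOn utilde u (Ici 0) := fun y hy => by rw [hutilde y, if_pos (show (0:ℝ) ≤ y from hy)]
  refine ⟨?_, heq, ?_, ?_⟩
  · -- upper semicontinuity
    intro z t ht
    rcases lt_trichotomy z 0 with hzlt | hz0 | hzgt
    · -- z < 0
      rw [hneg z hzlt] at ht
      have hP' := hP z
      have h1 : sInf ((fun x => u x / (1 + |x| ^ μ) + x / |z|) '' Ici 0) < t / (1 + |z| ^ μ) :=
        (lt_div_iff₀ hP').2 ht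
      obtain ⟨b, ⟨x, hx, rfl⟩, hb⟩ := exists_lt_of_csInf_lt (hne z) h1
      set f : ℝ → ℝ := fun y => (u x / (1 + |x| ^ μ) + x / |y|) * (1 + |y| ^ μ) with hf
      have hzne : |z| ≠ 0 := abs_ne_zero.2 hzlt.ne
      have hcont : ContinuousAt f z := by
        have ha : ContinuousAt (fun y : ℝ => |y|) z := continuous_abs.continuousAt
        have hr : ContinuousAt (fun y : ℝ => |y| ^ μ) z :=
          (Real.continuousAt_rpow_const _ _ (Or.inl hzne)).comp ha
        exact (((continuousAt_const.add ((continuousAt_const.div ha hzne)))).mul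
          (continuousAt_const.add hr))
      have hfz : f z < t := by
        have := (lt_div_iff₀ hP').1 hb
        simpa [hf] using this
      have hev1 : ∀ᶠ y in nhds z, f y < t :=
        hcont.eventually_lt continuousAt_const hfz
      have hev2 : ∀ᶠ y in nhds z, y < 0 := eventually_nhds_iff.2 ⟨Iio 0, fun a ha => ha,
        isOpen_Iio, hzlt⟩
      filter_upwards [hev1, hev2] with y h1y h2y
      rw [hneg y h2y]
      calc sInf ((fun x => u x / (1 + |x| ^ μ) + x / |y|) '' Ici 0) * (1 + |y| ^ μ)
          ≤ (u x / (1 + |x| ^ μ) + x / |y|) * (1 + |y| ^ μ) :=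
            mul_le_mul_of_nonneg_right (csInf_le (hbb y) ⟨x, hx, rfl⟩) (hP y).le
        _ < t := h1y
    · -- z = 0
      subst hz0
      have hu : utilde 0 = u 0 := heq self_mem_Ici
      rw [hu] at ht
      have hright : ∀ᶠ y in nhdsWithin (0:ℝ) (Ici 0), utilde y < t := by
        filter_upwards [husc 0 self_mem_Ici t ht, self_mem_nhdsWithin] with y h1 h2
        rw [heq h2]; exact h1
      have hleft : ∀ᶠ y in nhdsWithin (0:ℝ) (Iio 0), utilde y < t := by
        have hcont : ContinuousAt (fun y : ℝ => u 0 * (1 + |y| ^ μ)) 0 := by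
          have ha : ContinuousAt (fun y : ℝ => |y|) 0 := continuous_abs.continuousAt
          have hr : ContinuousAt (fun y : ℝ => |y| ^ μ) 0 :=
            (Real.continuousAt_rpow_const _ _ (Or.inr hμ0.le)).comp ha
          exact continuousAt_const.mul (continuousAt_const.add hr)
        have hval : u 0 * (1 + |(0:ℝ)| ^ μ) < t := by simpa [hz] using ht
        have hev : ∀ᶠ y in nhds (0:ℝ), u 0 * (1 + |y| ^ μ) < t :=
          hcont.eventually_lt continuousAt_const hval
        filter_upwards [nhdsWithin_le_nhds hev, self_mem_nhdsWithin] with y h1 h2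
        exact lt_of_le_of_lt (hdle y h2) h1
      have : nhds (0:ℝ) = nhdsWithin 0 (Iio 0) ⊔ nhdsWithin 0 (Ici 0) :=
        (nhdsLT_sup_nhdsGE (0:ℝ)).symm
      show ∀ᶠ y in nhds (0:ℝ), utilde y < t
      rw [this]
      exact Filter.eventually_sup.2 ⟨hleft, hright⟩
    · -- z > 0
      have hmem : Ici (0:ℝ) ∈ nhds z := Ici_mem_nhds hzgt
      have hu : utilde z = u z := heq (le_of_lt hzgt)
      rw [hu] at ht
      have := husc z (le_of_lt hzgt) t ht
      rw [nhdsWithin_eq_nhds.2 hmem] at this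
      filter_upwards [this, hmem] with y h1 h2
      rw [heq h2]; exact h1
  · -- growth bound
    refine ⟨C, fun y => ?_⟩
    rcases le_or_gt 0 y with hy | hy
    · rw [heq hy, abs_of_nonneg hy]
      exact hC y hy
    · rw [hneg y hy, abs_mul, abs_of_pos (hP y)]
      refine mul_le_mul_of_nonneg_right ?_ (hP y).le
      rw [abs_le]
      have hC0 : (0:ℝ) ≤ C := le_trans (abs_nonneg (u 0)) (by simpa [hz] using hC 0 le_rfl)
      exact ⟨hgeC y, (hle0 y).trans (hu0.trans hC0)⟩
  · intro y hy
    refine ⟨hdle y hy, ?_⟩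
    exact mul_nonpos_of_nonpos_of_nonneg hu0 (hP y).le
end
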